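/- arXiv:2311.18748 — 2 statements merged into one kernel-verified Lean document; each statement's English description precedes it below -/
import Mathlib

section
/- Let 1 < p ≤ 2, p ≤ q < ∞, 0 < θ < 1, and let B₀, B₁ be Banach spaces. Suppose an interpolation norm ‖·‖_θ on B₀ ∩ B₁-valued data satisfies ‖x‖_θ ≤ e·‖x‖₀^{1−θ}‖x‖₁^θ whenever x has representations in both ℓ_q(B₀) and ℓ_q(B₁) with the respective norms ‖x‖₀, ‖x‖₁. Then a_{m,p}(B_θ) ≤ C·a_{m,p}(B₀)^{1−θ}·a_{m,p}(B₁)^{θ} for a constant C = C(p,q) independent of m. -/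
/-- The `m`-th type-`p` constant `a_{m,p}(X)`. -/
noncomputable def typeConst (X : Type*) [NormedAddCommGroup X] [NormedSpace ℝ X]
    (m : ℕ) (p : ℝ) : ℝ :=
  sInf {a : ℝ | 0 ≤ a ∧ ∀ x : Fin m → X,
    (∑ ε : Fin m → Bool, ‖∑ j, (if ε j then (1 : ℝ) else -1) • x j‖) / 2 ^ m ≤
      a * (∑ j, ‖x j‖ ^ p) ^ (1 / p)}

open Finset

namespace Stmt11Aux

noncomputable section
open scoped Classical

def sg (b : Bool) : ℝ := if b then 1 else -1

@[simp] lemma sg_not (b : Bool) : sg (!b) = - sg b := by cases b <;> simp [sg]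

@[simp] lemma abs_sg (b : Bool) : |sg b| = 1 := by cases b <;> simp [sg]

@[simp] lemma norm_sg_smul {B : Type*} [NormedAddCommGroup B] [NormedSpace ℝ B]
    (b : Bool) (v : B) : ‖sg b • v‖ = ‖v‖ := by
  rw [norm_smul, Real.norm_eq_abs, abs_sg, one_mul]

variable {B : Type*} [NormedAddCommGroup B] [NormedSpace ℝ B] {m : ℕ}

def S (y : Fin m → B) (ε : Fin m → Bool) : B := ∑ j, sg (ε j) • y j

def P (y : Fin m → B) (c : ℕ) (ε : Fin m → Bool) : B :=
  ∑ j : Fin m, if (j : ℕ) < c then sg (ε j) • y j else 0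

def refl (c : ℕ) (ε : Fin m → Bool) : Fin m → Bool :=
  fun j => if (j : ℕ) < c then ε j else !(ε j)

lemma refl_invol (c : ℕ) : Function.Involutive (refl (m := m) c) := by
  intro ε; funext j; simp only [refl]; by_cases h : (j : ℕ) < c <;> simp [h]

@[simp] lemma P_zero (y : Fin m → B) (ε : Fin m → Bool) : P y 0 ε = 0 := by
  simp [P]

lemma P_eq_S (y : Fin m → B) (ε : Fin m → Bool) : P y m ε = S y ε := by
  unfold P S
  exact Finset.sum_congr rfl (fun j _ => by simp [j.isLt])

lemma P_succ (y : Fin m → B) (ε : Fin m → Bool) {c : ℕ} (hc : c < m) :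
    P y (c + 1) ε = P y c ε + sg (ε ⟨c, hc⟩) • y ⟨c, hc⟩ := by
  unfold P
  have key : ∀ j : Fin m,
      (if (j : ℕ) < c + 1 then sg (ε j) • y j else 0)
        = (if (j : ℕ) < c then sg (ε j) • y j else 0)
          + (if j = ⟨c, hc⟩ then sg (ε j) • y j else 0) := by
    intro j
    rcases lt_trichotomy (j : ℕ) c with h | h | h
    · have h1 : (j : ℕ) < c + 1 := by omega
      have h2 : j ≠ ⟨c, hc⟩ := by
        intro hj; rw [hj] at h; simp at h
      simp [h, h1, h2]
    · have h1 : (j : ℕ) < c + 1 := by omega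
      have h2 : j = ⟨c, hc⟩ := by
        apply Fin.ext; simpa using h
      simp [h, h1, h2]
    · have h1 : ¬ (j : ℕ) < c + 1 := by omega
      have h2 : ¬ (j : ℕ) < c := by omega
      have h3 : j ≠ ⟨c, hc⟩ := by
        intro hj; rw [hj] at h; simp at h
      simp [h1, h2, h3]
  rw [Finset.sum_congr rfl (fun j _ => key j), Finset.sum_add_distrib]
  congr 1
  simp

lemma P_congr (y : Fin m → B) {c i : ℕ} (hic : i ≤ c) {α β : Fin m → Bool}
    (h : ∀ j : Fin m, (j : ℕ) < c → α j = β j) : P y i α = P y i β := by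
  unfold P
  refine Finset.sum_congr rfl (fun j _ => ?_)
  by_cases hj : (j : ℕ) < i
  · rw [h j (lt_of_lt_of_le hj hic)]
  · simp [hj]

lemma P_refl (y : Fin m → B) {c i : ℕ} (hic : i ≤ c) (ε : Fin m → Bool) :
    P y i (refl c ε) = P y i ε :=
  P_congr y hic (fun j hj => by simp [refl, hj])

lemma S_add_S_refl (y : Fin m → B) (c : ℕ) (ε : Fin m → Bool) :
    S y ε + S y (refl c ε) = (2 : ℝ) • P y c ε := by
  unfold S P
  rw [← Finset.sum_add_distrib, Finset.smul_sum]
  refine Finset.sum_congr rfl (fun j _ => ?_)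
  by_cases h : (j : ℕ) < c
  · simp [refl, h, two_smul]
  · simp [refl, h]

lemma norm_P_le (y : Fin m → B) (c : ℕ) (ε : Fin m → Bool) :
    2 * ‖P y c ε‖ ≤ ‖S y ε‖ + ‖S y (refl c ε)‖ := by
  have h := congrArg norm (S_add_S_refl y c ε)
  rw [norm_smul] at h
  calc 2 * ‖P y c ε‖ = ‖(2:ℝ)‖ * ‖P y c ε‖ := by norm_num
    _ = ‖S y ε + S y (refl c ε)‖ := h.symm
    _ ≤ _ := norm_add_le _ _

/-! ### Counting lemmas -/

def Nt (y : Fin m → B) (t : ℝ) : ℕ :=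
  (univ.filter (fun ε : Fin m → Bool => t < ‖S y ε‖)).card

/-- generic reflection counting helper -/
lemma card_le_two_mul_filter {Ω : Type*} [Fintype Ω] [DecidableEq Ω] {A : Finset Ω}
    {E : Ω → Prop} (σ : Ω → Ω) (hinj : Function.Injective σ)
    (hmem : ∀ ε ∈ A, ¬ E ε → σ ε ∈ A ∧ E (σ ε)) :
    A.card ≤ 2 * (A.filter E).card := by
  have hsplit := Finset.card_filter_add_card_filter_not (s := A) (p := E)
  have hle : (A.filter (fun ε => ¬ E ε)).card ≤ (A.filter E).card := by
    apply Finset.card_le_card_of_injOn σ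
    · intro ε hε
      rw [Finset.mem_coe] at hε ⊢
      rw [Finset.mem_filter] at hε
      rcases hmem ε hε.1 hε.2 with ⟨h1, h2⟩
      exact Finset.mem_filter.2 ⟨h1, h2⟩
    · exact Function.Injective.injOn hinj
  omega

def AkSet (y : Fin m → B) (t : ℝ) (k : ℕ) : Finset (Fin m → Bool) :=
  univ.filter (fun ε => (∀ i < k, ‖P y (i+1) ε‖ ≤ t) ∧ t < ‖P y (k+1) ε‖)

lemma refl_mem_AkSet {y : Fin m → B} {t : ℝ} {k : ℕ} {ε : Fin m → Bool}
    (h : ε ∈ AkSet y t k) : refl (k+1) ε ∈ AkSet y t k := by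
  rw [AkSet, Finset.mem_filter] at h ⊢
  refine ⟨Finset.mem_univ _, ?_, ?_⟩
  · intro i hi
    rw [P_refl y (by omega)]
    exact h.2.1 i hi
  · rw [P_refl y le_rfl]
    exact h.2.2

lemma AkSet_card_le (y : Fin m → B) (t : ℝ) (k : ℕ) :
    (AkSet y t k).card ≤ 2 * ((AkSet y t k).filter (fun ε => t < ‖S y ε‖)).card := by
  apply card_le_two_mul_filter (refl (k+1)) (refl_invol (k+1)).injective
  intro ε hε hS
  refine ⟨refl_mem_AkSet hε, ?_⟩
  rw [AkSet, Finset.mem_filter] at hε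
  have h1 := hε.2.2
  have h2 := norm_P_le y (k+1) ε
  push_neg at hS
  nlinarith
 
lemma AkSet_disjoint (y : Fin m → B) (t : ℝ) {k k' : ℕ} (h : k ≠ k') :
    Disjoint (AkSet y t k) (AkSet y t k') := by
  wlog hlt : k < k' generalizing k k'
  · exact (this h.symm (by omega)).symm
  rw [Finset.disjoint_left]
  intro ε h1 h2
  rw [AkSet, Finset.mem_filter] at h1 h2
  exact absurd (h2.2.1 k hlt) (not_le.2 h1.2.2)

lemma levy_max (y : Fin m → B) (t : ℝ) :
    ∑ k ∈ range m, (AkSet y t k).card ≤ 2 * Nt y t := by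
  calc ∑ k ∈ range m, (AkSet y t k).card
      ≤ ∑ k ∈ range m, 2 * ((AkSet y t k).filter (fun ε => t < ‖S y ε‖)).card :=
        Finset.sum_le_sum (fun k _ => AkSet_card_le y t k)
    _ = 2 * ∑ k ∈ range m, ((AkSet y t k).filter (fun ε => t < ‖S y ε‖)).card := by
        rw [Finset.mul_sum]
    _ ≤ 2 * Nt y t := by
        have hdisj : ∀ k1 ∈ (range m : Finset ℕ), ∀ k2 ∈ (range m : Finset ℕ), k1 ≠ k2 →
            Disjoint ((AkSet y t k1).filter (fun ε => t < ‖S y ε‖))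
              ((AkSet y t k2).filter (fun ε => t < ‖S y ε‖)) := by
          intro k1 _ k2 _ hne
          exact Finset.disjoint_filter_filter (AkSet_disjoint y t hne)
        rw [← Finset.card_biUnion hdisj]
        have hsub : (range m).biUnion (fun k => (AkSet y t k).filter (fun ε => t < ‖S y ε‖))
            ⊆ univ.filter (fun ε => t < ‖S y ε‖) := by
          intro ε hε
          rw [Finset.mem_biUnion] at hε
          rcases hε with ⟨k, _, hk⟩
          rw [Finset.mem_filter] at hk
          exact Finset.mem_filter.2 ⟨Finset.mem_univ _, hk.2⟩
        exact Nat.mul_le_mul_left 2 (Finset.card_le_card hsub)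

/-! ### Tail sums -/

def Tl (y : Fin m → B) (k : ℕ) (ε : Fin m → Bool) : B := S y ε - P y (k+1) ε

lemma Tl_eq (y : Fin m → B) (k : ℕ) (ε : Fin m → Bool) :
    Tl y k ε = ∑ j : Fin m, if (j : ℕ) < k + 1 then 0 else sg (ε j) • y j := by
  unfold Tl S P
  rw [← Finset.sum_sub_distrib]
  refine Finset.sum_congr rfl (fun j _ => ?_)
  by_cases h : (j : ℕ) < k + 1 <;> simp [h]

lemma Tl_congr (y : Fin m → B) (k : ℕ) {α β : Fin m → Bool}
    (h : ∀ j : Fin m, ¬ (j : ℕ) < k + 1 → α j = β j) : Tl y k α = Tl y k β := by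
  rw [Tl_eq, Tl_eq]
  refine Finset.sum_congr rfl (fun j _ => ?_)
  by_cases hj : (j : ℕ) < k + 1
  · simp [hj]
  · rw [h j hj]

lemma Tl_refl (y : Fin m → B) (k : ℕ) (ε : Fin m → Bool) :
    Tl y k (refl (k+1) ε) = - Tl y k ε := by
  rw [Tl_eq, Tl_eq, ← Finset.sum_neg_distrib]
  refine Finset.sum_congr rfl (fun j _ => ?_)
  by_cases hj : (j : ℕ) < k + 1
  · simp [hj]
  · simp [refl, hj]

lemma norm_Tl_le (y : Fin m → B) (k : ℕ) (ε : Fin m → Bool) :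
    2 * ‖Tl y k ε‖ ≤ ‖S y ε‖ + ‖S y (refl (k+1) ε)‖ := by
  have key : (2:ℝ) • Tl y k ε = S y ε - S y (refl (k+1) ε) := by
    have h := S_add_S_refl y (k+1) ε
    unfold Tl
    rw [smul_sub, two_smul, ← h]
    abel
  have h := congrArg norm key
  rw [norm_smul] at h
  calc 2 * ‖Tl y k ε‖ = ‖(2:ℝ)‖ * ‖Tl y k ε‖ := by norm_num
    _ = ‖S y ε - S y (refl (k+1) ε)‖ := h
    _ ≤ _ := norm_sub_le _ _

lemma Bk_card_le (y : Fin m → B) (t : ℝ) (k : ℕ) :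
    (univ.filter (fun ε => t < ‖Tl y k ε‖)).card ≤ 2 * Nt y t := by
  have step : (univ.filter (fun ε => t < ‖Tl y k ε‖)).card
      ≤ 2 * ((univ.filter (fun ε => t < ‖Tl y k ε‖)).filter (fun ε => t < ‖S y ε‖)).card := by
    apply card_le_two_mul_filter (refl (k+1)) (refl_invol (k+1)).injective
    intro ε hε hS
    rw [Finset.mem_filter] at hε
    constructor
    · refine Finset.mem_filter.2 ⟨Finset.mem_univ _, ?_⟩
      rw [Tl_refl, norm_neg]
      exact hε.2
    · have h1 := hε.2
      have h2 := norm_Tl_le y k ε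
      push_neg at hS
      nlinarith
  refine step.trans (Nat.mul_le_mul_left 2 (Finset.card_le_card ?_))
  rw [Finset.filter_filter]
  intro ε hε
  rw [Finset.mem_filter] at hε
  exact Finset.mem_filter.2 ⟨Finset.mem_univ _, hε.2.2⟩


/-! ### Independence -/

lemma card_filter_equiv {α : Type*} [Fintype α] [DecidableEq α] (e : α ≃ α) (Pr : α → Prop) :
    (univ.filter (fun x => Pr (e x))).card = (univ.filter Pr).card := by
  classical
  apply Finset.card_bij' (fun x _ => e x) (fun y _ => e.symm y)
  · intro x hx
    rw [Finset.mem_filter] at hx ⊢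
    exact ⟨Finset.mem_univ _, hx.2⟩
  · intro y hy
    rw [Finset.mem_filter] at hy ⊢
    refine ⟨Finset.mem_univ _, ?_⟩
    rw [Equiv.apply_symm_apply]
    exact hy.2
  · intro x _; exact e.symm_apply_apply x
  · intro y _; exact e.apply_symm_apply y

def mix (c : ℕ) (α β : Fin m → Bool) : Fin m → Bool :=
  fun j => if (j : ℕ) < c then α j else β j

lemma indep_count (c : ℕ) (f g : (Fin m → Bool) → Prop)
    (hf : ∀ α β : Fin m → Bool, (∀ j : Fin m, (j : ℕ) < c → α j = β j) → (f α ↔ f β))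
    (hg : ∀ α β : Fin m → Bool, (∀ j : Fin m, ¬ (j : ℕ) < c → α j = β j) → (g α ↔ g β)) :
    (univ.filter (fun ε => f ε ∧ g ε)).card * 2 ^ m
      = (univ.filter f).card * (univ.filter g).card := by
  classical
  have hinv : Function.Involutive
      (fun pr : (Fin m → Bool) × (Fin m → Bool) => (mix c pr.1 pr.2, mix c pr.2 pr.1)) := by
    rintro ⟨a, b⟩
    simp only [Prod.mk.injEq]
    constructor <;> (funext j; simp only [mix]; by_cases h : (j : ℕ) < c <;> simp [h])
  set ψ : ((Fin m → Bool) × (Fin m → Bool)) ≃ ((Fin m → Bool) × (Fin m → Bool)) :=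
    hinv.toPerm _ with hψ
  have hψ1 : ∀ pr : (Fin m → Bool) × (Fin m → Bool), ψ pr = (mix c pr.1 pr.2, mix c pr.2 pr.1) :=
    fun pr => rfl
  have hmix1 : ∀ α β : Fin m → Bool, f (mix c α β) ↔ f α :=
    fun α β => hf _ _ (fun j hj => by simp [mix, hj])
  have hmix2 : ∀ α β : Fin m → Bool, g (mix c α β) ↔ g β :=
    fun α β => hg _ _ (fun j hj => by simp [mix, hj])
  have h1 : (univ.filter (fun pr : (Fin m → Bool) × (Fin m → Bool) => f pr.1 ∧ g pr.2)).card
      = (univ.filter f).card * (univ.filter g).card := by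
    have : (univ.filter (fun pr : (Fin m → Bool) × (Fin m → Bool) => f pr.1 ∧ g pr.2))
        = (univ.filter f) ×ˢ (univ.filter g) := by
      ext pr
      simp only [Finset.mem_filter, Finset.mem_product, Finset.mem_univ, true_and]
    rw [this, Finset.card_product]
  have h2 : (univ.filter (fun pr : (Fin m → Bool) × (Fin m → Bool) => f pr.1 ∧ g pr.2)).card
      = (univ.filter (fun pr : (Fin m → Bool) × (Fin m → Bool) =>
          f (ψ pr).1 ∧ g (ψ pr).2)).card := by
    have := (card_filter_equiv ψ (fun pr => f pr.1 ∧ g pr.2)).symm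
    convert this using 3 <;> congr!
  have h3 : (univ.filter (fun pr : (Fin m → Bool) × (Fin m → Bool) =>
          f (ψ pr).1 ∧ g (ψ pr).2))
      = (univ.filter (fun pr : (Fin m → Bool) × (Fin m → Bool) => f pr.1 ∧ g pr.1)) := by
    apply Finset.filter_congr
    intro pr _
    rw [hψ1]
    simp only
    rw [hmix1, hmix2]
  have h4 : (univ.filter (fun pr : (Fin m → Bool) × (Fin m → Bool) => f pr.1 ∧ g pr.1)).card
      = (univ.filter (fun ε => f ε ∧ g ε)).card * 2 ^ m := by
    have : (univ.filter (fun pr : (Fin m → Bool) × (Fin m → Bool) => f pr.1 ∧ g pr.1))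
        = (univ.filter (fun ε => f ε ∧ g ε)) ×ˢ (univ : Finset (Fin m → Bool)) := by
      ext pr
      simp only [Finset.mem_filter, Finset.mem_product, Finset.mem_univ, true_and, and_true]
    rw [this, Finset.card_product, Finset.card_univ, Fintype.card_fun]
    simp
  calc (univ.filter (fun ε => f ε ∧ g ε)).card * 2 ^ m
      = (univ.filter (fun pr : (Fin m → Bool) × (Fin m → Bool) => f pr.1 ∧ g pr.1)).card :=
        h4.symm
    _ = (univ.filter (fun pr : (Fin m → Bool) × (Fin m → Bool) =>
          f (ψ pr).1 ∧ g (ψ pr).2)).card := by rw [h3]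
    _ = (univ.filter (fun pr : (Fin m → Bool) × (Fin m → Bool) => f pr.1 ∧ g pr.2)).card :=
        h2.symm
    _ = (univ.filter f).card * (univ.filter g).card := h1

/-! ### The master inequality -/

lemma master (y : Fin m → B) {t : ℝ} (ht : 0 ≤ t) :
    Nt y (3 * t) * 2 ^ m ≤ 4 * (Nt y t) ^ 2 := by
  by_cases hy : ∀ j : Fin m, ‖y j‖ ≤ t
  · -- inclusion into the union of stopped events with large tails
    have incl : univ.filter (fun ε => 3 * t < ‖S y ε‖)
        ⊆ (range m).biUnion (fun k =>
            univ.filter (fun ε => ((∀ i < k, ‖P y (i+1) ε‖ ≤ t) ∧ t < ‖P y (k+1) ε‖)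
              ∧ t < ‖Tl y k ε‖)) := by
      intro ε hε
      rw [Finset.mem_filter] at hε
      have hS := hε.2
      have hm : 0 < m := by
        rcases Nat.eq_zero_or_pos m with h0 | h0
        · exfalso
          have : S y ε = 0 := by
            unfold S; subst h0; simp
          rw [this, norm_zero] at hS
          nlinarith
        · exact h0
      have hex : ∃ i, t < ‖P y (i+1) ε‖ := by
        refine ⟨m - 1, ?_⟩
        have : m - 1 + 1 = m := by omega
        rw [this, P_eq_S]
        nlinarith
      set k := Nat.find hex with hk
      have hk1 : t < ‖P y (k+1) ε‖ := Nat.find_spec hex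
      have hkmin : ∀ i < k, ‖P y (i+1) ε‖ ≤ t := by
        intro i hi
        have := Nat.find_min hex hi
        push_neg at this
        exact this
      have hkm : k < m := by
        have : k ≤ m - 1 := Nat.find_min' hex (by
          have : m - 1 + 1 = m := by omega
          rw [this, P_eq_S]; nlinarith)
        omega
      have hPk : ‖P y k ε‖ ≤ t := by
        rcases Nat.eq_zero_or_pos k with h0 | h0
        · rw [h0]; simpa using ht
        · have hkk : k - 1 + 1 = k := by omega
          rw [← hkk]
          exact hkmin (k-1) (by omega)
      have hPk1 : ‖P y (k+1) ε‖ ≤ 2 * t := by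
        rw [P_succ y ε hkm]
        calc ‖P y k ε + sg (ε ⟨k, hkm⟩) • y ⟨k, hkm⟩‖
            ≤ ‖P y k ε‖ + ‖sg (ε ⟨k, hkm⟩) • y ⟨k, hkm⟩‖ := norm_add_le _ _
          _ ≤ t + t := by
              rw [norm_sg_smul]
              exact add_le_add hPk (hy _)
          _ = 2 * t := by ring
      have hTl : t < ‖Tl y k ε‖ := by
        have hd : ‖S y ε‖ - ‖P y (k+1) ε‖ ≤ ‖Tl y k ε‖ := by
          unfold Tl
          exact norm_sub_norm_le _ _
        nlinarith
      rw [Finset.mem_biUnion]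
      exact ⟨k, Finset.mem_range.2 hkm, Finset.mem_filter.2 ⟨Finset.mem_univ _,
        ⟨hkmin, hk1⟩, hTl⟩⟩
    -- now count
    have step1 : Nt y (3*t) ≤ ∑ k ∈ range m,
        (univ.filter (fun ε => ((∀ i < k, ‖P y (i+1) ε‖ ≤ t) ∧ t < ‖P y (k+1) ε‖)
          ∧ t < ‖Tl y k ε‖)).card :=
      (Finset.card_le_card incl).trans (Finset.card_biUnion_le)
    have step2 : ∀ k, (univ.filter (fun ε => ((∀ i < k, ‖P y (i+1) ε‖ ≤ t) ∧ t < ‖P y (k+1) ε‖)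
          ∧ t < ‖Tl y k ε‖)).card * 2 ^ m ≤ (AkSet y t k).card * (2 * Nt y t) := by
      intro k
      have heq : (univ.filter (fun ε => ((∀ i < k, ‖P y (i+1) ε‖ ≤ t) ∧ t < ‖P y (k+1) ε‖)
            ∧ t < ‖Tl y k ε‖)).card * 2 ^ m
          = (AkSet y t k).card * (univ.filter (fun ε => t < ‖Tl y k ε‖)).card := by
        have := indep_count (k+1)
          (fun ε => (∀ i < k, ‖P y (i+1) ε‖ ≤ t) ∧ t < ‖P y (k+1) ε‖)
          (fun ε => t < ‖Tl y k ε‖)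
          (by
            intro α β hab
            show ((∀ i < k, ‖P y (i+1) α‖ ≤ t) ∧ t < ‖P y (k+1) α‖)
              ↔ ((∀ i < k, ‖P y (i+1) β‖ ≤ t) ∧ t < ‖P y (k+1) β‖)
            constructor <;> intro h <;> constructor
            · intro i hi; rw [← P_congr y (by omega : i + 1 ≤ k + 1) hab]; exact h.1 i hi
            · rw [← P_congr y (le_refl (k+1)) hab]; exact h.2
            · intro i hi; rw [P_congr y (by omega : i + 1 ≤ k + 1) hab]; exact h.1 i hi
            · rw [P_congr y (le_refl (k+1)) hab]; exact h.2)
          (by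
            intro α β hab
            show t < ‖Tl y k α‖ ↔ t < ‖Tl y k β‖
            rw [Tl_congr y k hab])
        unfold AkSet
        convert this using 3 <;> congr! <;> congr!
      rw [heq]
      exact Nat.mul_le_mul_left _ (Bk_card_le y t k)
    calc Nt y (3*t) * 2 ^ m
        ≤ (∑ k ∈ range m, (univ.filter (fun ε =>
            ((∀ i < k, ‖P y (i+1) ε‖ ≤ t) ∧ t < ‖P y (k+1) ε‖)
            ∧ t < ‖Tl y k ε‖)).card) * 2 ^ m := Nat.mul_le_mul_right _ step1
      _ = ∑ k ∈ range m, (univ.filter (fun ε =>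
            ((∀ i < k, ‖P y (i+1) ε‖ ≤ t) ∧ t < ‖P y (k+1) ε‖)
            ∧ t < ‖Tl y k ε‖)).card * 2 ^ m := Finset.sum_mul _ _ _
      _ ≤ ∑ k ∈ range m, (AkSet y t k).card * (2 * Nt y t) :=
          Finset.sum_le_sum (fun k _ => step2 k)
      _ = (∑ k ∈ range m, (AkSet y t k).card) * (2 * Nt y t) := (Finset.sum_mul _ _ _).symm
      _ ≤ (2 * Nt y t) * (2 * Nt y t) :=
          Nat.mul_le_mul_right _ (levy_max y t)
      _ = 4 * (Nt y t) ^ 2 := by ring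
  · -- some coordinate is large: the event has probability ≥ 1/2
    push_neg at hy
    rcases hy with ⟨j, hj⟩
    have flip_invol : Function.Involutive (fun ε : Fin m → Bool => Function.update ε j (!ε j)) := by
      intro ε; funext i
      by_cases h : i = j
      · subst h; simp [Function.update]
      · simp [Function.update, h]
    have hflipS : ∀ ε : Fin m → Bool,
        S y ε - S y (Function.update ε j (!ε j)) = (2 * sg (ε j)) • y j := by
      intro ε
      unfold S
      rw [← Finset.sum_sub_distrib]
      rw [Finset.sum_eq_single j]
      · simp [Function.update, two_mul, sub_smul, add_smul]
      · intro i _ hij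
        simp [Function.update, hij]
      · intro h; exact absurd (Finset.mem_univ j) h
    have half : 2 ^ m ≤ 2 * Nt y t := by
      have key : (univ.filter (fun ε : Fin m → Bool => ¬ t < ‖S y ε‖)).card ≤ Nt y t := by
        apply Finset.card_le_card_of_injOn (fun ε => Function.update ε j (!ε j))
        · intro ε hε
          rw [Finset.mem_coe] at hε ⊢
          rw [Finset.mem_filter] at hε
          refine Finset.mem_filter.2 ⟨Finset.mem_univ _, ?_⟩
          by_contra hcon
          push_neg at hcon
          have hε2 := hε.2
          push_neg at hε2
          have h1 := hflipS ε
          have h2 := congrArg norm h1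
          rw [norm_smul, Real.norm_eq_abs, abs_mul, abs_sg] at h2
          have h3 : ‖S y ε - S y (Function.update ε j (!ε j))‖
              ≤ ‖S y ε‖ + ‖S y (Function.update ε j (!ε j))‖ := norm_sub_le _ _
          rw [h2] at h3
          simp only [abs_two, mul_one] at h3
          nlinarith
        · exact flip_invol.injective.injOn
      have hsplit := Finset.card_filter_add_card_filter_not
        (s := (univ : Finset (Fin m → Bool))) (p := fun ε => t < ‖S y ε‖)
      have hcard : (univ : Finset (Fin m → Bool)).card = 2 ^ m := by
        rw [Finset.card_univ, Fintype.card_fun]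
        simp
      unfold Nt at *
      omega
    have h1 : Nt y (3*t) ≤ 2 ^ m := by
      have h2 := Finset.card_filter_le (univ : Finset (Fin m → Bool))
        (fun ε => 3*t < ‖S y ε‖)
      have hcard : (univ : Finset (Fin m → Bool)).card = 2 ^ m := by
        rw [Finset.card_univ, Fintype.card_fun]
        simp
      unfold Nt
      omega
    calc Nt y (3*t) * 2^m ≤ 2^m * 2^m := Nat.mul_le_mul h1 (le_refl _)
      _ ≤ (2 * Nt y t) * (2 * Nt y t) := Nat.mul_le_mul half half
      _ = 4 * (Nt y t)^2 := by ring


/-! ### Moment comparison (Kahane's inequality) -/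

lemma rpow_pow_comm {x : ℝ} (hx : 0 ≤ x) (n : ℕ) (q : ℝ) :
    (x ^ n) ^ q = (x ^ q) ^ n := by
  rw [← Real.rpow_natCast x n, ← Real.rpow_mul hx, mul_comm,
    Real.rpow_mul hx, Real.rpow_natCast]

def kah (c : ℝ) : ℝ := ∑' k : ℕ, c ^ (k + 1) * (2⁻¹ : ℝ) ^ (2 ^ k)

lemma kah_summable {c : ℝ} (hc : 1 ≤ c) :
    Summable (fun k : ℕ => c ^ (k + 1) * (2⁻¹ : ℝ) ^ (2 ^ k)) := by
  have hc0 : 0 < c := lt_of_lt_of_le one_pos hc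
  obtain ⟨K, hK⟩ := pow_unbounded_of_one_lt c (one_lt_two (α := ℝ))
  apply summable_of_ratio_norm_eventually_le (r := 2⁻¹) (by norm_num)
  filter_upwards [Filter.eventually_ge_atTop K] with k hk
  have hterm : ∀ j : ℕ, (0:ℝ) ≤ c ^ (j + 1) * (2⁻¹ : ℝ) ^ (2 ^ j) := by
    intro j; positivity
  rw [Real.norm_of_nonneg (hterm (k+1)), Real.norm_of_nonneg (hterm k)]
  have hfac : c ^ (k + 1 + 1) * (2⁻¹ : ℝ) ^ (2 ^ (k+1))
      = (c * (2⁻¹ : ℝ) ^ (2 ^ k)) * (c ^ (k + 1) * (2⁻¹ : ℝ) ^ (2 ^ k)) := by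
    have h2 : 2 ^ (k+1) = 2 ^ k + 2 ^ k := by rw [pow_succ]; ring
    rw [h2, pow_add]
    ring
  rw [hfac]
  have hkey : c * (2⁻¹ : ℝ) ^ (2 ^ k) ≤ 2⁻¹ := by
    have h1 : c * (2⁻¹ : ℝ) ^ (2 ^ k) ≤ 2 ^ K * (2⁻¹ : ℝ) ^ (2 ^ k) :=
      mul_le_mul_of_nonneg_right hK.le (by positivity)
    have h2 : (2:ℝ) ^ K * (2⁻¹ : ℝ) ^ (2 ^ k) ≤ 2⁻¹ := by
      have hpow : (2:ℝ) ^ (K + 1) ≤ 2 ^ (2 ^ k) := by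
        apply pow_le_pow_right₀ (by norm_num : (1:ℝ) ≤ 2)
        have hlt := Nat.lt_two_pow_self (n := k)
        omega
      have h2k : (0:ℝ) < 2 ^ (2 ^ k) := by positivity
      have hs : (2:ℝ) ^ (K + 1) = 2 ^ K * 2 := pow_succ 2 K
      rw [inv_pow, ← div_eq_mul_inv, div_le_iff₀ h2k]
      linarith
    exact h1.trans h2
  exact mul_le_mul_of_nonneg_right hkey (hterm k)

lemma kah_nonneg {c : ℝ} (hc : 1 ≤ c) : 0 ≤ kah c :=
  tsum_nonneg (fun k => by positivity)

/-- the Kahane constant -/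
def KC (q : ℝ) : ℝ := 8 ^ q * (1 + kah (3 ^ q))

lemma one_le_three_rpow {q : ℝ} (hq : 0 ≤ q) : (1:ℝ) ≤ 3 ^ q := by
  calc (1:ℝ) = 1 ^ q := (Real.one_rpow q).symm
    _ ≤ 3 ^ q := Real.rpow_le_rpow (by norm_num) (by norm_num) hq

lemma KC_pos {q : ℝ} (hq : 0 ≤ q) : 0 < KC q := by
  unfold KC
  have h1 : (0:ℝ) < 8 ^ q := Real.rpow_pos_of_pos (by norm_num) q
  nlinarith [kah_nonneg (one_le_three_rpow hq)]

lemma iter_bound (y : Fin m → B) {t₀ : ℝ} (ht₀ : 0 ≤ t₀)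
    (hbase : (Nt y t₀ : ℝ) ≤ 2 ^ m / 8) :
    ∀ k : ℕ, (Nt y (3 ^ k * t₀) : ℝ) ≤ 2 ^ m * (2⁻¹ : ℝ) ^ (2 ^ k) / 4 := by
  intro k
  induction k with
  | zero =>
    simp only [pow_zero, one_mul, pow_one]
    linarith
  | succ k ih =>
    have hmas := master y (t := 3 ^ k * t₀) (by positivity)
    have hcast : (Nt y (3 * (3 ^ k * t₀)) : ℝ) * 2 ^ m ≤ 4 * (Nt y (3 ^ k * t₀) : ℝ) ^ 2 := by
      have := Nat.cast_le (α := ℝ) |>.2 hmas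
      push_cast at this
      convert this using 2 <;> ring
    have heq : 3 * (3 ^ k * t₀) = 3 ^ (k+1) * t₀ := by ring
    rw [heq] at hcast
    have hN : (0:ℝ) ≤ (Nt y (3 ^ k * t₀) : ℝ) := Nat.cast_nonneg _
    have h2m : (0:ℝ) < 2 ^ m := by positivity
    have hsq : (Nt y (3 ^ k * t₀) : ℝ) ^ 2 ≤ (2 ^ m * (2⁻¹ : ℝ) ^ (2 ^ k) / 4) ^ 2 := by
      apply sq_le_sq' _ ih
      nlinarith
    have hkey : (Nt y (3 ^ (k+1) * t₀) : ℝ) * 2 ^ m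
        ≤ (2 ^ m * (2⁻¹ : ℝ) ^ (2 ^ (k+1)) / 4) * 2 ^ m := by
      have h4 : 4 * ((2:ℝ) ^ m * (2⁻¹ : ℝ) ^ (2 ^ k) / 4) ^ 2
          = (2 ^ m * (2⁻¹ : ℝ) ^ (2 ^ (k+1)) / 4) * 2 ^ m := by
        have h2 : (2:ℕ) ^ (k+1) = 2 ^ k + 2 ^ k := by rw [pow_succ]; ring
        rw [h2, pow_add]
        ring
      calc (Nt y (3 ^ (k+1) * t₀) : ℝ) * 2 ^ m ≤ 4 * (Nt y (3 ^ k * t₀) : ℝ) ^ 2 := hcast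
        _ ≤ 4 * (2 ^ m * (2⁻¹ : ℝ) ^ (2 ^ k) / 4) ^ 2 := by nlinarith
        _ = _ := h4
    exact le_of_mul_le_mul_right hkey h2m

theorem kahane_moment (q : ℝ) (hq : 1 ≤ q) (y : Fin m → B) :
    ∑ ε : Fin m → Bool, ‖S y ε‖ ^ q
      ≤ KC q * 2 ^ m * ((∑ ε : Fin m → Bool, ‖S y ε‖) / 2 ^ m) ^ q := by
  have hq0 : 0 < q := lt_of_lt_of_le one_pos hq
  set Sig := ∑ ε : Fin m → Bool, ‖S y ε‖ with hSigdef
  have hSignonneg : 0 ≤ Sig := Finset.sum_nonneg (fun ε _ => norm_nonneg _)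
  rcases eq_or_lt_of_le hSignonneg with hSig0 | hSigpos
  · -- all the sums are zero
    have hzero : ∀ ε ∈ (univ : Finset (Fin m → Bool)), ‖S y ε‖ = 0 :=
      (Finset.sum_eq_zero_iff_of_nonneg (fun ε _ => norm_nonneg _)).1 hSig0.symm
    have hL : ∑ ε : Fin m → Bool, ‖S y ε‖ ^ q = 0 := by
      apply Finset.sum_eq_zero
      intro ε hε
      rw [hzero ε hε, Real.zero_rpow (ne_of_gt hq0)]
    rw [hL, ← hSig0]
    rw [zero_div, Real.zero_rpow (ne_of_gt hq0), mul_zero]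
  · have h2m : (0:ℝ) < 2 ^ m := by positivity
    set M := Sig / 2 ^ m with hMdef
    have hM : 0 < M := div_pos hSigpos h2m
    set t₀ := 8 * M with ht₀def
    have ht₀ : 0 < t₀ := by positivity
    -- Markov
    have hmarkov : (Nt y t₀ : ℝ) ≤ 2 ^ m / 8 := by
      have hub : (Nt y t₀ : ℝ) * t₀ ≤ Sig := by
        unfold Nt
        calc ((univ.filter (fun ε : Fin m → Bool => t₀ < ‖S y ε‖)).card : ℝ) * t₀
            = ∑ _ε ∈ univ.filter (fun ε : Fin m → Bool => t₀ < ‖S y ε‖), t₀ := by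
              rw [Finset.sum_const, nsmul_eq_mul]
          _ ≤ ∑ ε ∈ univ.filter (fun ε : Fin m → Bool => t₀ < ‖S y ε‖), ‖S y ε‖ :=
              Finset.sum_le_sum (fun ε hε => (Finset.mem_filter.1 hε).2.le)
          _ ≤ Sig := Finset.sum_le_sum_of_subset_of_nonneg (Finset.filter_subset _ _)
              (fun ε _ _ => norm_nonneg _)
      have hSigeq : Sig = M * 2 ^ m := by
        rw [hMdef]; field_simp
      rw [hSigeq] at hub
      rw [ht₀def] at hub
      nlinarith
    have hiter := iter_bound y ht₀.le hmarkov
    -- split the sum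
    rw [← Finset.sum_filter_add_sum_filter_not (univ : Finset (Fin m → Bool))
      (fun ε => ‖S y ε‖ ≤ t₀) (fun ε => ‖S y ε‖ ^ q)]
    have hbound1 : ∑ ε ∈ univ.filter (fun ε : Fin m → Bool => ‖S y ε‖ ≤ t₀), ‖S y ε‖ ^ q
        ≤ 2 ^ m * t₀ ^ q := by
      calc ∑ ε ∈ univ.filter (fun ε : Fin m → Bool => ‖S y ε‖ ≤ t₀), ‖S y ε‖ ^ q
          ≤ ∑ _ε ∈ univ.filter (fun ε : Fin m → Bool => ‖S y ε‖ ≤ t₀), t₀ ^ q :=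
            Finset.sum_le_sum (fun ε hε =>
              Real.rpow_le_rpow (norm_nonneg _) (Finset.mem_filter.1 hε).2 hq0.le)
        _ = ((univ.filter (fun ε : Fin m → Bool => ‖S y ε‖ ≤ t₀)).card : ℝ) * t₀ ^ q := by
            rw [Finset.sum_const, nsmul_eq_mul]
        _ ≤ 2 ^ m * t₀ ^ q := by
            apply mul_le_mul_of_nonneg_right _ (Real.rpow_nonneg ht₀.le q)
            have := Finset.card_filter_le (univ : Finset (Fin m → Bool))
              (fun ε => ‖S y ε‖ ≤ t₀)
            have hcard : (univ : Finset (Fin m → Bool)).card = 2 ^ m := by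
              rw [Finset.card_univ, Fintype.card_fun]; simp
            calc ((univ.filter (fun ε : Fin m → Bool => ‖S y ε‖ ≤ t₀)).card : ℝ)
                ≤ ((univ : Finset (Fin m → Bool)).card : ℝ) := Nat.cast_le.2 this
              _ = 2 ^ m := by rw [hcard]; push_cast; ring
    -- the large part
    have hex : ∀ ε : Fin m → Bool, ∃ k : ℕ, ‖S y ε‖ ≤ 3 ^ (k+1) * t₀ := by
      intro ε
      obtain ⟨n, hn⟩ := pow_unbounded_of_one_lt (‖S y ε‖ / t₀) (by norm_num : (1:ℝ) < 3)
      refine ⟨n, ?_⟩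
      rw [div_lt_iff₀ ht₀] at hn
      have h3 : (3:ℝ) ^ n * t₀ ≤ 3 ^ (n+1) * t₀ := by
        apply mul_le_mul_of_nonneg_right _ ht₀.le
        apply pow_le_pow_right₀ (by norm_num : (1:ℝ) ≤ 3)
        omega
      linarith
    set κ : (Fin m → Bool) → ℕ := fun ε => Nat.find (hex ε) with hκdef
    have hκub : ∀ ε, ‖S y ε‖ ≤ 3 ^ (κ ε + 1) * t₀ := fun ε => Nat.find_spec (hex ε)
    have hκlb : ∀ ε, ¬ ‖S y ε‖ ≤ t₀ → 3 ^ (κ ε) * t₀ < ‖S y ε‖ := by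
      intro ε hbad
      rcases Nat.eq_zero_or_pos (κ ε) with h0 | h0
      · rw [h0]
        push_neg at hbad
        simpa using hbad
      · have := Nat.find_min (hex ε) (m := κ ε - 1)
          (by have hrfl : κ ε = Nat.find (hex ε) := rfl; omega)
        push_neg at this
        have hk1 : κ ε - 1 + 1 = κ ε := by omega
        rwa [hk1] at this
    set Bad := univ.filter (fun ε : Fin m → Bool => ¬ ‖S y ε‖ ≤ t₀) with hBaddef
    have hbound2 : ∑ ε ∈ Bad, ‖S y ε‖ ^ q ≤ 2 ^ m * t₀ ^ q * kah (3 ^ q) := by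
      have hstep1 : ∑ ε ∈ Bad, ‖S y ε‖ ^ q
          ≤ ∑ ε ∈ Bad, ((3:ℝ) ^ q) ^ (κ ε + 1) * t₀ ^ q := by
        apply Finset.sum_le_sum
        intro ε hε
        calc ‖S y ε‖ ^ q ≤ (3 ^ (κ ε + 1) * t₀) ^ q :=
              Real.rpow_le_rpow (norm_nonneg _) (hκub ε) hq0.le
          _ = ((3:ℝ) ^ q) ^ (κ ε + 1) * t₀ ^ q := by
              rw [Real.mul_rpow (by positivity) ht₀.le, rpow_pow_comm (by norm_num : (0:ℝ) ≤ 3)]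
      have hstep2 : ∑ ε ∈ Bad, ((3:ℝ) ^ q) ^ (κ ε + 1) * t₀ ^ q
          = ∑ b ∈ Bad.image κ, ((Bad.filter (fun ε => κ ε = b)).card : ℝ)
              * (((3:ℝ) ^ q) ^ (b + 1) * t₀ ^ q) := by
        rw [← Finset.sum_fiberwise_of_maps_to' (fun ε hε => Finset.mem_image_of_mem κ hε)
          (fun b => ((3:ℝ) ^ q) ^ (b + 1) * t₀ ^ q)]
        refine Finset.sum_congr rfl (fun b _ => ?_)
        rw [Finset.sum_const, nsmul_eq_mul]
      have hstep3 : ∀ b ∈ Bad.image κ,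
          ((Bad.filter (fun ε => κ ε = b)).card : ℝ) * (((3:ℝ) ^ q) ^ (b + 1) * t₀ ^ q)
            ≤ 2 ^ m * t₀ ^ q * (((3:ℝ) ^ q) ^ (b + 1) * (2⁻¹:ℝ) ^ (2 ^ b)) := by
        intro b _
        have hsub : Bad.filter (fun ε => κ ε = b)
            ⊆ univ.filter (fun ε : Fin m → Bool => 3 ^ b * t₀ < ‖S y ε‖) := by
          intro ε hε
          rw [Finset.mem_filter] at hε
          rcases hε with ⟨hbad, hκb⟩
          rw [hBaddef, Finset.mem_filter] at hbad
          refine Finset.mem_filter.2 ⟨Finset.mem_univ _, ?_⟩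
          have := hκlb ε hbad.2
          rwa [hκb] at this
        have hcard : ((Bad.filter (fun ε => κ ε = b)).card : ℝ) ≤ 2 ^ m * (2⁻¹:ℝ) ^ (2 ^ b) := by
          calc ((Bad.filter (fun ε => κ ε = b)).card : ℝ)
              ≤ (Nt y (3 ^ b * t₀) : ℝ) := by
                apply Nat.cast_le.2
                exact Finset.card_le_card hsub
            _ ≤ 2 ^ m * (2⁻¹:ℝ) ^ (2 ^ b) / 4 := hiter b
            _ ≤ 2 ^ m * (2⁻¹:ℝ) ^ (2 ^ b) := by
                have : (0:ℝ) ≤ 2 ^ m * (2⁻¹:ℝ) ^ (2 ^ b) := by positivity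
                linarith
        calc ((Bad.filter (fun ε => κ ε = b)).card : ℝ) * (((3:ℝ) ^ q) ^ (b + 1) * t₀ ^ q)
            ≤ (2 ^ m * (2⁻¹:ℝ) ^ (2 ^ b)) * (((3:ℝ) ^ q) ^ (b + 1) * t₀ ^ q) := by
              apply mul_le_mul_of_nonneg_right hcard
              positivity
          _ = 2 ^ m * t₀ ^ q * (((3:ℝ) ^ q) ^ (b + 1) * (2⁻¹:ℝ) ^ (2 ^ b)) := by ring
      have hstep4 : ∑ b ∈ Bad.image κ, ((3:ℝ) ^ q) ^ (b + 1) * (2⁻¹:ℝ) ^ (2 ^ b)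
          ≤ kah (3 ^ q) := by
        apply Summable.sum_le_tsum (Bad.image κ) (fun b _ => by positivity)
          (kah_summable (one_le_three_rpow hq0.le))
      calc ∑ ε ∈ Bad, ‖S y ε‖ ^ q
          ≤ ∑ b ∈ Bad.image κ, ((Bad.filter (fun ε => κ ε = b)).card : ℝ)
              * (((3:ℝ) ^ q) ^ (b + 1) * t₀ ^ q) := by rw [← hstep2]; exact hstep1
        _ ≤ ∑ b ∈ Bad.image κ, 2 ^ m * t₀ ^ q * (((3:ℝ) ^ q) ^ (b + 1) * (2⁻¹:ℝ) ^ (2 ^ b)) :=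
            Finset.sum_le_sum hstep3
        _ = 2 ^ m * t₀ ^ q * ∑ b ∈ Bad.image κ, (((3:ℝ) ^ q) ^ (b + 1) * (2⁻¹:ℝ) ^ (2 ^ b)) := by
            rw [Finset.mul_sum]
        _ ≤ 2 ^ m * t₀ ^ q * kah (3 ^ q) := by
            apply mul_le_mul_of_nonneg_left hstep4
            positivity
    -- combine
    have ht₀q : t₀ ^ q = 8 ^ q * M ^ q := by
      rw [ht₀def, Real.mul_rpow (by norm_num) hM.le]
    calc (∑ ε ∈ univ.filter (fun ε : Fin m → Bool => ‖S y ε‖ ≤ t₀), ‖S y ε‖ ^ q)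
          + ∑ ε ∈ Bad, ‖S y ε‖ ^ q
        ≤ 2 ^ m * t₀ ^ q + 2 ^ m * t₀ ^ q * kah (3 ^ q) := add_le_add hbound1 hbound2
      _ = KC q * 2 ^ m * M ^ q := by unfold KC; rw [ht₀q]; ring


/-! ### Auxiliary real-power lemmas -/

lemma rpow_self_split {x θ : ℝ} (hx : 0 ≤ x) (hθ : 0 < θ) (hθ1 : θ < 1) :
    x ^ (1 - θ) * x ^ θ = x := by
  rcases eq_or_lt_of_le hx with h0 | h0
  · rw [← h0, Real.zero_rpow (by linarith : 1 - θ ≠ 0), Real.zero_rpow (ne_of_gt hθ), mul_zero]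
  · rw [← Real.rpow_add h0, sub_add_cancel, Real.rpow_one]

/-- two-factor Hölder inequality for finite sums -/
lemma holder_sum {ι : Type*} (s : Finset ι) (A B : ι → ℝ)
    (hA : ∀ i ∈ s, 0 ≤ A i) (hB : ∀ i ∈ s, 0 ≤ B i) {θ : ℝ} (hθ : 0 < θ) (hθ1 : θ < 1) :
    ∑ i ∈ s, A i ^ (1 - θ) * B i ^ θ ≤ (∑ i ∈ s, A i) ^ (1 - θ) * (∑ i ∈ s, B i) ^ θ := by
  have hSA : 0 ≤ ∑ i ∈ s, A i := Finset.sum_nonneg hA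
  have hSB : 0 ≤ ∑ i ∈ s, B i := Finset.sum_nonneg hB
  rcases eq_or_lt_of_le hSA with hA0 | hApos
  · have hzero : ∀ i ∈ s, A i = 0 :=
      (Finset.sum_eq_zero_iff_of_nonneg hA).1 hA0.symm
    have hL : ∑ i ∈ s, A i ^ (1 - θ) * B i ^ θ = 0 := by
      apply Finset.sum_eq_zero
      intro i hi
      rw [hzero i hi, Real.zero_rpow (by linarith : 1 - θ ≠ 0), zero_mul]
    rw [hL, ← hA0, Real.zero_rpow (by linarith : 1 - θ ≠ 0), zero_mul]
  rcases eq_or_lt_of_le hSB with hB0 | hBpos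
  · have hzero : ∀ i ∈ s, B i = 0 :=
      (Finset.sum_eq_zero_iff_of_nonneg hB).1 hB0.symm
    have hL : ∑ i ∈ s, A i ^ (1 - θ) * B i ^ θ = 0 := by
      apply Finset.sum_eq_zero
      intro i hi
      rw [hzero i hi, Real.zero_rpow (ne_of_gt hθ), mul_zero]
    rw [hL, ← hB0, Real.zero_rpow (ne_of_gt hθ), mul_zero]
  · have key : ∀ i ∈ s, A i ^ (1 - θ) * B i ^ θ
        ≤ (∑ i ∈ s, A i) ^ (1 - θ) * (∑ i ∈ s, B i) ^ θ
          * ((1 - θ) * (A i / ∑ i ∈ s, A i) + θ * (B i / ∑ i ∈ s, B i)) := by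
      intro i hi
      have hAi := hA i hi
      have hBi := hB i hi
      have young := Real.geom_mean_le_arith_mean2_weighted
        (by linarith : (0:ℝ) ≤ 1 - θ) hθ.le
        (div_nonneg hAi hSA) (div_nonneg hBi hSB) (by ring)
      have hsplitA : A i ^ (1 - θ) = (∑ i ∈ s, A i) ^ (1 - θ) * (A i / ∑ i ∈ s, A i) ^ (1 - θ) := by
        rw [← Real.mul_rpow hSA (div_nonneg hAi hSA), mul_div_cancel₀ _ (ne_of_gt hApos)]
      have hsplitB : B i ^ θ = (∑ i ∈ s, B i) ^ θ * (B i / ∑ i ∈ s, B i) ^ θ := by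
        rw [← Real.mul_rpow hSB (div_nonneg hBi hSB), mul_div_cancel₀ _ (ne_of_gt hBpos)]
      calc A i ^ (1 - θ) * B i ^ θ
          = ((∑ i ∈ s, A i) ^ (1 - θ) * (∑ i ∈ s, B i) ^ θ)
            * ((A i / ∑ i ∈ s, A i) ^ (1 - θ) * (B i / ∑ i ∈ s, B i) ^ θ) := by
            rw [hsplitA, hsplitB]; ring
        _ ≤ _ := by
            apply mul_le_mul_of_nonneg_left young
            have h1 : (0:ℝ) ≤ (∑ i ∈ s, A i) ^ (1 - θ) := Real.rpow_nonneg hSA _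
            have h2 : (0:ℝ) ≤ (∑ i ∈ s, B i) ^ θ := Real.rpow_nonneg hSB _
            exact mul_nonneg h1 h2
    calc ∑ i ∈ s, A i ^ (1 - θ) * B i ^ θ
        ≤ ∑ i ∈ s, (∑ i ∈ s, A i) ^ (1 - θ) * (∑ i ∈ s, B i) ^ θ
            * ((1 - θ) * (A i / ∑ i ∈ s, A i) + θ * (B i / ∑ i ∈ s, B i)) :=
          Finset.sum_le_sum key
      _ = (∑ i ∈ s, A i) ^ (1 - θ) * (∑ i ∈ s, B i) ^ θ := by
          rw [← Finset.mul_sum]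
          have : ∑ i ∈ s, ((1 - θ) * (A i / ∑ i ∈ s, A i) + θ * (B i / ∑ i ∈ s, B i)) = 1 := by
            rw [Finset.sum_add_distrib, ← Finset.mul_sum, ← Finset.mul_sum]
            rw [← Finset.sum_div, ← Finset.sum_div]
            rw [div_self (ne_of_gt hApos), div_self (ne_of_gt hBpos)]
            ring
          rw [this, mul_one]

/-! ### Membership of the type constant in its defining set -/

lemma typeConst_spec (X : Type*) [NormedAddCommGroup X] [NormedSpace ℝ X] (m : ℕ)
    {p : ℝ} (hp : 0 < p) :
    0 ≤ typeConst X m p ∧ ∀ x : Fin m → X,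
      (∑ ε : Fin m → Bool, ‖∑ j, (if ε j then (1 : ℝ) else -1) • x j‖) / 2 ^ m ≤
        typeConst X m p * (∑ j, ‖x j‖ ^ p) ^ (1 / p) := by
  classical
  have h2m : (0:ℝ) < 2 ^ m := by positivity
  set s : Set ℝ := {a : ℝ | 0 ≤ a ∧ ∀ x : Fin m → X,
    (∑ ε : Fin m → Bool, ‖∑ j, (if ε j then (1 : ℝ) else -1) • x j‖) / 2 ^ m ≤
      a * (∑ j, ‖x j‖ ^ p) ^ (1 / p)} with hs
  have hclosed : IsClosed s := by
    have hseq : s = {a : ℝ | 0 ≤ a} ∩ ⋂ x : Fin m → X,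
        {a : ℝ | (∑ ε : Fin m → Bool, ‖∑ j, (if ε j then (1 : ℝ) else -1) • x j‖) / 2 ^ m ≤
          a * (∑ j, ‖x j‖ ^ p) ^ (1 / p)} := by
      ext a
      simp only [hs, Set.mem_setOf_eq, Set.mem_inter_iff, Set.mem_iInter]
    rw [hseq]
    exact IsClosed.inter (isClosed_le continuous_const continuous_id)
      (isClosed_iInter (fun x => isClosed_le continuous_const
        (continuous_id.mul continuous_const)))
  have hne : s.Nonempty := by
    refine ⟨(m : ℝ), Nat.cast_nonneg m, fun x => ?_⟩
    set R := (∑ j, ‖x j‖ ^ p) ^ (1 / p) with hR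
    have hR0 : 0 ≤ R := Real.rpow_nonneg
      (Finset.sum_nonneg (fun j _ => Real.rpow_nonneg (norm_nonneg _) _)) _
    have hxj : ∀ j : Fin m, ‖x j‖ ≤ R := by
      intro j
      have h1 : ‖x j‖ ^ p ≤ ∑ j', ‖x j'‖ ^ p :=
        Finset.single_le_sum (f := fun j' => ‖x j'‖ ^ p)
          (fun i _ => Real.rpow_nonneg (norm_nonneg _) p) (Finset.mem_univ j)
      calc ‖x j‖ = (‖x j‖ ^ p) ^ (1 / p) := by
            rw [← Real.rpow_mul (norm_nonneg _), mul_one_div_cancel (ne_of_gt hp),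
              Real.rpow_one]
        _ ≤ R := Real.rpow_le_rpow (Real.rpow_nonneg (norm_nonneg _) _) h1 (by positivity)
    have hnorm : ∀ ε : Fin m → Bool,
        ‖∑ j, (if ε j then (1:ℝ) else -1) • x j‖ ≤ (m : ℝ) * R := by
      intro ε
      calc ‖∑ j, (if ε j then (1:ℝ) else -1) • x j‖
          ≤ ∑ j, ‖(if ε j then (1:ℝ) else -1) • x j‖ := norm_sum_le _ _
        _ = ∑ j, ‖x j‖ := Finset.sum_congr rfl (fun j _ => norm_sg_smul (ε j) (x j))
        _ ≤ ∑ _j : Fin m, R := Finset.sum_le_sum (fun j _ => hxj j)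
        _ = (m:ℝ) * R := by
            rw [Finset.sum_const, nsmul_eq_mul, Finset.card_univ, Fintype.card_fin]
    rw [div_le_iff₀ h2m]
    calc ∑ ε : Fin m → Bool, ‖∑ j, (if ε j then (1:ℝ) else -1) • x j‖
        ≤ ∑ _ε : Fin m → Bool, (m:ℝ) * R := Finset.sum_le_sum (fun ε _ => hnorm ε)
      _ = 2 ^ m * ((m:ℝ) * R) := by
          rw [Finset.sum_const, nsmul_eq_mul, Finset.card_univ, Fintype.card_fun,
            Fintype.card_bool, Fintype.card_fin]
          push_cast
          ring
      _ = (m:ℝ) * R * 2 ^ m := by ring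
  have hbdd : BddBelow s := ⟨0, fun a ha => ha.1⟩
  exact hclosed.csInf_mem hne hbdd


/-! ### Lifting the type inequality to `ℓ_q(X)` -/

set_option maxHeartbeats 1600000 in
lemma lift_type {X : Type*} [NormedAddCommGroup X] [NormedSpace ℝ X]
    {q p : ℝ} (hp : 0 < p) (hq : 1 ≤ q) (hpq : p ≤ q) [Fact (1 ≤ ENNReal.ofReal q)]
    {m : ℕ} {a : ℝ} (ha0 : 0 ≤ a)
    (hty : ∀ z : Fin m → X,
      (∑ ε : Fin m → Bool, ‖∑ j, sg (ε j) • z j‖) / 2 ^ m ≤ a * (∑ j, ‖z j‖ ^ p) ^ (1 / p))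
    (Y : Fin m → lp (fun _ : ℕ => X) (ENNReal.ofReal q)) :
    (∑ ε : Fin m → Bool, ‖∑ j, sg (ε j) • Y j‖) / 2 ^ m
      ≤ (KC q) ^ (1 / q) * a * (∑ j, ‖Y j‖ ^ p) ^ (1 / p) := by
  classical
  have hq0 : 0 < q := lt_of_lt_of_le one_pos hq
  have hqt : (ENNReal.ofReal q).toReal = q := ENNReal.toReal_ofReal hq0.le
  have h2m : (0:ℝ) < 2 ^ m := by positivity
  -- coordinates of the Rademacher sums
  have hcoe : ∀ (ε : Fin m → Bool) (n : ℕ),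
      (((∑ j, sg (ε j) • Y j : lp (fun _ : ℕ => X) (ENNReal.ofReal q))) : ∀ _ : ℕ, X) n
        = ∑ j, sg (ε j) • (Y j n) := by
    intro ε n
    rw [lp.coeFn_sum, Finset.sum_apply]
    refine Finset.sum_congr rfl (fun j _ => ?_)
    rw [lp.coeFn_smul, Pi.smul_apply]
  have hnormq : ∀ ε : Fin m → Bool,
      ‖∑ j, sg (ε j) • Y j‖ ^ q = ∑' n, ‖∑ j, sg (ε j) • (Y j n)‖ ^ q := by
    intro ε
    have h := lp.norm_rpow_eq_tsum (p := ENNReal.ofReal q)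
      (by rw [hqt]; exact hq0) (∑ j, sg (ε j) • Y j)
    rw [hqt] at h
    rw [h]
    exact tsum_congr (fun n => by rw [hcoe])
  have hsummS : ∀ ε : Fin m → Bool, Summable (fun n => ‖∑ j, sg (ε j) • (Y j n)‖ ^ q) := by
    intro ε
    have h := (lp.memℓp (∑ j, sg (ε j) • Y j)).summable (by rw [hqt]; exact hq0)
    rw [hqt] at h
    exact h.congr (fun n => by rw [hcoe])
  -- Minkowski's inequality via the `ℓ^{q/p}` triangle inequality
  have hr1 : (1:ℝ) ≤ q / p := (one_le_div hp).2 hpq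
  have hr0 : (0:ℝ) < q / p := by positivity
  haveI : Fact (1 ≤ ENNReal.ofReal (q / p)) := ⟨ENNReal.one_le_ofReal.2 hr1⟩
  have hrt : (ENNReal.ofReal (q / p)).toReal = q / p := ENNReal.toReal_ofReal hr0.le
  have hpq' : p * (q / p) = q := by field_simp
  have hYsum : ∀ j, Summable (fun n => ‖Y j n‖ ^ q) := by
    intro j
    have h := (lp.memℓp (Y j)).summable (by rw [hqt]; exact hq0)
    rwa [hqt] at h
  have hkey_eq : ∀ (j : Fin m) (n : ℕ), ‖(‖Y j n‖ ^ p : ℝ)‖ ^ (q/p) = ‖Y j n‖ ^ q := by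
    intro j n
    rw [Real.norm_of_nonneg (Real.rpow_nonneg (norm_nonneg _) _),
      ← Real.rpow_mul (norm_nonneg _), hpq']
  have hmemH : ∀ j : Fin m, Memℓp (fun n => ‖Y j n‖ ^ p) (ENNReal.ofReal (q / p)) := by
    intro j
    apply memℓp_gen
    rw [hrt]
    exact (hYsum j).congr (fun n => (hkey_eq j n).symm)
  set H : Fin m → lp (fun _ : ℕ => ℝ) (ENNReal.ofReal (q / p)) :=
    fun j => ⟨fun n => ‖Y j n‖ ^ p, hmemH j⟩ with hHdef
  have hHnorm : ∀ j, ‖H j‖ = ‖Y j‖ ^ p := by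
    intro j
    have h1 : ‖H j‖ = (∑' n, ‖Y j n‖ ^ q) ^ (1 / (q / p)) := by
      rw [lp.norm_eq_tsum_rpow (by rw [hrt]; exact hr0), hrt]
      congr 1
      exact tsum_congr (fun n => hkey_eq j n)
    have h2 : ‖Y j‖ = (∑' n, ‖Y j n‖ ^ q) ^ (1 / q) := by
      rw [lp.norm_eq_tsum_rpow (by rw [hqt]; exact hq0), hqt]
    have htsum0 : (0:ℝ) ≤ ∑' n, ‖Y j n‖ ^ q :=
      tsum_nonneg (fun n => Real.rpow_nonneg (norm_nonneg _) _)
    rw [h1, h2, ← Real.rpow_mul htsum0]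
    congr 1
    field_simp
  have hHcoe : ∀ n : ℕ,
      ((∑ j, H j : lp (fun _ : ℕ => ℝ) (ENNReal.ofReal (q / p))) : ∀ _ : ℕ, ℝ) n
        = ∑ j, ‖Y j n‖ ^ p := by
    intro n
    rw [lp.coeFn_sum, Finset.sum_apply]
  have hHn0 : ∀ n : ℕ, (0:ℝ) ≤ ∑ j, ‖Y j n‖ ^ p :=
    fun n => Finset.sum_nonneg (fun j _ => Real.rpow_nonneg (norm_nonneg _) _)
  have hmink_sum : Summable (fun n => (∑ j, ‖Y j n‖ ^ p) ^ (q / p)) := by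
    have h := (lp.memℓp (∑ j, H j)).summable (by rw [hrt]; exact hr0)
    rw [hrt] at h
    exact h.congr (fun n => by rw [hHcoe n, Real.norm_of_nonneg (hHn0 n)])
  have hmink : ∑' n, (∑ j, ‖Y j n‖ ^ p) ^ (q / p) ≤ (∑ j, ‖Y j‖ ^ p) ^ (q / p) := by
    have h1 : ∑' n, (∑ j, ‖Y j n‖ ^ p) ^ (q / p) = ‖∑ j, H j‖ ^ (q / p) := by
      have h := lp.norm_rpow_eq_tsum (by rw [hrt]; exact hr0) (∑ j, H j)
      rw [hrt] at h
      rw [h]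
      exact tsum_congr (fun n => by rw [hHcoe n, Real.norm_of_nonneg (hHn0 n)])
    have h2 : ‖∑ j, H j‖ ≤ ∑ j, ‖Y j‖ ^ p := by
      calc ‖∑ j, H j‖ ≤ ∑ j, ‖H j‖ := norm_sum_le _ _
        _ = ∑ j, ‖Y j‖ ^ p := Finset.sum_congr rfl (fun j _ => hHnorm j)
    rw [h1]
    exact Real.rpow_le_rpow (norm_nonneg _) h2 hr0.le
  -- per-coordinate Kahane + the type inequality in X
  have hKC0 : (0:ℝ) ≤ KC q := (KC_pos hq0.le).le
  have hpercoord : ∀ n : ℕ, ∑ ε : Fin m → Bool, ‖∑ j, sg (ε j) • (Y j n)‖ ^ q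
      ≤ KC q * 2 ^ m * (a ^ q * (∑ j, ‖Y j n‖ ^ p) ^ (q / p)) := by
    intro n
    have hkah := kahane_moment q hq (fun j => Y j n)
    simp only [S] at hkah
    have hty' := hty (fun j => Y j n)
    have hmean0 : (0:ℝ) ≤ (∑ ε : Fin m → Bool, ‖∑ j, sg (ε j) • (Y j n)‖) / 2 ^ m := by
      apply div_nonneg _ h2m.le
      exact Finset.sum_nonneg (fun ε _ => norm_nonneg _)
    have hrq : ((∑ ε : Fin m → Bool, ‖∑ j, sg (ε j) • (Y j n)‖) / 2 ^ m) ^ q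
        ≤ (a * (∑ j, ‖Y j n‖ ^ p) ^ (1 / p)) ^ q :=
      Real.rpow_le_rpow hmean0 hty' hq0.le
    have hsplit : (a * (∑ j, ‖Y j n‖ ^ p) ^ (1 / p)) ^ q
        = a ^ q * (∑ j, ‖Y j n‖ ^ p) ^ (q / p) := by
      rw [Real.mul_rpow ha0 (Real.rpow_nonneg (hHn0 n) _), ← Real.rpow_mul (hHn0 n)]
      congr 1
      ring
    calc ∑ ε : Fin m → Bool, ‖∑ j, sg (ε j) • (Y j n)‖ ^ q
        ≤ KC q * 2 ^ m * (((∑ ε : Fin m → Bool, ‖∑ j, sg (ε j) • (Y j n)‖) / 2 ^ m)) ^ q :=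
          hkah
      _ ≤ KC q * 2 ^ m * (a ^ q * (∑ j, ‖Y j n‖ ^ p) ^ (q / p)) := by
          apply mul_le_mul_of_nonneg_left _ (mul_nonneg hKC0 h2m.le)
          rw [← hsplit]
          exact hrq
  -- sum the coordinates
  have hsum_q : ∑ ε : Fin m → Bool, ‖∑ j, sg (ε j) • Y j‖ ^ q
      ≤ KC q * 2 ^ m * (a ^ q * (∑ j, ‖Y j‖ ^ p) ^ (q / p)) := by
    have hT0 : (0:ℝ) ≤ ∑ j, ‖Y j‖ ^ p :=
      Finset.sum_nonneg (fun j _ => Real.rpow_nonneg (norm_nonneg _) _)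
    calc ∑ ε : Fin m → Bool, ‖∑ j, sg (ε j) • Y j‖ ^ q
        = ∑ ε : Fin m → Bool, ∑' n, ‖∑ j, sg (ε j) • (Y j n)‖ ^ q :=
          Finset.sum_congr rfl (fun ε _ => hnormq ε)
      _ = ∑' n, ∑ ε : Fin m → Bool, ‖∑ j, sg (ε j) • (Y j n)‖ ^ q :=
          (Summable.tsum_finsetSum (fun ε _ => hsummS ε)).symm
      _ ≤ ∑' n, KC q * 2 ^ m * (a ^ q * (∑ j, ‖Y j n‖ ^ p) ^ (q / p)) := by
          apply Summable.tsum_le_tsum hpercoord (summable_sum (fun ε _ => hsummS ε))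
          exact ((hmink_sum.mul_left (a ^ q)).mul_left (KC q * 2 ^ m))
      _ = KC q * 2 ^ m * (a ^ q * ∑' n, (∑ j, ‖Y j n‖ ^ p) ^ (q / p)) := by
          rw [tsum_mul_left, tsum_mul_left]
      _ ≤ KC q * 2 ^ m * (a ^ q * (∑ j, ‖Y j‖ ^ p) ^ (q / p)) := by
          apply mul_le_mul_of_nonneg_left _ (mul_nonneg hKC0 h2m.le)
          exact mul_le_mul_of_nonneg_left hmink (Real.rpow_nonneg ha0 q)
  -- Jensen (power-mean) step
  have hA0 : (0:ℝ) ≤ ∑ ε : Fin m → Bool, ‖∑ j, sg (ε j) • Y j‖ :=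
    Finset.sum_nonneg (fun ε _ => norm_nonneg _)
  have hjensen : (∑ ε : Fin m → Bool, ‖∑ j, sg (ε j) • Y j‖) / 2 ^ m
      ≤ ((∑ ε : Fin m → Bool, ‖∑ j, sg (ε j) • Y j‖ ^ q) / 2 ^ m) ^ (1 / q) := by
    set F : (Fin m → Bool) → ℝ := fun ε => ‖∑ j, sg (ε j) • Y j‖ with hFdef
    have hF0 : ∀ ε, 0 ≤ F ε := fun ε => norm_nonneg _
    have hw : ∀ ε ∈ (univ : Finset (Fin m → Bool)), (0:ℝ) ≤ ((2:ℝ) ^ m)⁻¹ :=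
      fun _ _ => by positivity
    have hw' : ∑ _ε : Fin m → Bool, ((2:ℝ) ^ m)⁻¹ = 1 := by
      rw [Finset.sum_const, nsmul_eq_mul, Finset.card_univ, Fintype.card_fun,
        Fintype.card_bool, Fintype.card_fin]
      push_cast
      field_simp
    have hz : ∀ ε ∈ (univ : Finset (Fin m → Bool)), 0 ≤ F ε := fun ε _ => hF0 ε
    have key : (∑ ε : Fin m → Bool, ((2:ℝ) ^ m)⁻¹ * F ε) ^ q
        ≤ ∑ ε : Fin m → Bool, ((2:ℝ) ^ m)⁻¹ * F ε ^ q :=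
      Real.rpow_arith_mean_le_arith_mean_rpow univ (fun _ => ((2:ℝ) ^ m)⁻¹) F hw hw' hz hq
    have h1 : ∑ ε : Fin m → Bool, ((2:ℝ) ^ m)⁻¹ * F ε = (∑ ε : Fin m → Bool, F ε) / 2 ^ m := by
      rw [← Finset.mul_sum]
      ring
    have h2 : ∑ ε : Fin m → Bool, ((2:ℝ) ^ m)⁻¹ * F ε ^ q
        = (∑ ε : Fin m → Bool, F ε ^ q) / 2 ^ m := by
      rw [← Finset.mul_sum]
      ring
    rw [h1, h2] at key
    have hmean0 : (0:ℝ) ≤ (∑ ε : Fin m → Bool, F ε) / 2 ^ m :=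
      div_nonneg (Finset.sum_nonneg (fun ε _ => hF0 ε)) h2m.le
    calc (∑ ε : Fin m → Bool, F ε) / 2 ^ m
        = (((∑ ε : Fin m → Bool, F ε) / 2 ^ m) ^ q) ^ (1 / q) := by
          rw [← Real.rpow_mul hmean0, mul_one_div_cancel (ne_of_gt hq0), Real.rpow_one]
      _ ≤ ((∑ ε : Fin m → Bool, F ε ^ q) / 2 ^ m) ^ (1 / q) :=
          Real.rpow_le_rpow (Real.rpow_nonneg hmean0 q) key (by positivity)
  -- finish
  have hT0 : (0:ℝ) ≤ ∑ j, ‖Y j‖ ^ p :=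
    Finset.sum_nonneg (fun j _ => Real.rpow_nonneg (norm_nonneg _) _)
  calc (∑ ε : Fin m → Bool, ‖∑ j, sg (ε j) • Y j‖) / 2 ^ m
      ≤ ((∑ ε : Fin m → Bool, ‖∑ j, sg (ε j) • Y j‖ ^ q) / 2 ^ m) ^ (1 / q) := hjensen
    _ ≤ ((KC q * 2 ^ m * (a ^ q * (∑ j, ‖Y j‖ ^ p) ^ (q / p))) / 2 ^ m) ^ (1 / q) := by
        apply Real.rpow_le_rpow _ _ (by positivity)
        · apply div_nonneg _ h2m.le
          exact Finset.sum_nonneg (fun ε _ => Real.rpow_nonneg (norm_nonneg _) _)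
        · gcongr
    _ = (KC q) ^ (1 / q) * a * (∑ j, ‖Y j‖ ^ p) ^ (1 / p) := by
        have hdiv : (KC q * 2 ^ m * (a ^ q * (∑ j, ‖Y j‖ ^ p) ^ (q / p))) / 2 ^ m
            = KC q * (a ^ q * (∑ j, ‖Y j‖ ^ p) ^ (q / p)) := by
          field_simp
        rw [hdiv]
        rw [Real.mul_rpow hKC0 (mul_nonneg (Real.rpow_nonneg ha0 _) (Real.rpow_nonneg hT0 _)),
          Real.mul_rpow (Real.rpow_nonneg ha0 _) (Real.rpow_nonneg hT0 _),
          ← Real.rpow_mul ha0, ← Real.rpow_mul hT0,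
          mul_one_div_cancel (ne_of_gt hq0), Real.rpow_one]
        have hexp : q / p * (1 / q) = 1 / p := by
          field_simp
        rw [hexp]
        ring


end

end Stmt11Aux


open Stmt11Aux Finset

/-- Interpolation inequality for type constants: if the interpolation space `Bθ` is
obtained from representations in `ℓ_q(B₀)` and `ℓ_q(B₁)` (modelled by a data space `D`
with linear maps `T₀`, `T₁` giving the two representation norms, a linear surjection
`δ` onto `Bθ` with a `2`-bounded selector, and the log-convexity inequality
`‖δ d‖ ≤ e ‖T₀ d‖^{1-θ} ‖T₁ d‖^{θ}`), then
`a_{m,p}(Bθ) ≤ C a_{m,p}(B₀)^{1-θ} a_{m,p}(B₁)^{θ}` with `C = C(p,q)`. -/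
theorem stmt11 (p q θ : ℝ) (hp : 1 < p) (hp2 : p ≤ 2) (hpq : p ≤ q)
    (hθ : 0 < θ) (hθ1 : θ < 1) [Fact (1 ≤ ENNReal.ofReal q)] :
    ∃ C : ℝ, 0 < C ∧
      ∀ (B₀ B₁ Bθ : Type)
        [NormedAddCommGroup B₀] [NormedSpace ℝ B₀] [CompleteSpace B₀]
        [NormedAddCommGroup B₁] [NormedSpace ℝ B₁] [CompleteSpace B₁]
        [NormedAddCommGroup Bθ] [NormedSpace ℝ Bθ]
        (D : Type) [AddCommGroup D] [Module ℝ D]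
        (T₀ : D →ₗ[ℝ] lp (fun _ : ℕ => B₀) (ENNReal.ofReal q))
        (T₁ : D →ₗ[ℝ] lp (fun _ : ℕ => B₁) (ENNReal.ofReal q))
        (δ : D →ₗ[ℝ] Bθ),
        (∀ d : D, ‖δ d‖ ≤ Real.exp 1 * ‖T₀ d‖ ^ (1 - θ) * ‖T₁ d‖ ^ θ) →
        (∀ x : Bθ, ∃ d : D, δ d = x ∧ ‖T₀ d‖ ≤ 2 * ‖x‖ ∧ ‖T₁ d‖ ≤ 2 * ‖x‖) →
        ∀ m : ℕ, 1 ≤ m →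
          typeConst Bθ m p ≤ C * typeConst B₀ m p ^ (1 - θ) * typeConst B₁ m p ^ θ := by
  classical
  have hp0 : 0 < p := lt_trans one_pos hp
  have hq1 : (1:ℝ) ≤ q := le_trans hp.le hpq
  have hq0 : (0:ℝ) < q := lt_of_lt_of_le one_pos hq1
  set K := (KC q) ^ (1/q) with hKdef
  have hKpos : 0 < K := Real.rpow_pos_of_pos (KC_pos hq0.le) _
  refine ⟨2 * Real.exp 1 * K, by positivity, ?_⟩
  intro B₀ B₁ Bθ _ _ _ _ _ _ _ _ D _ _ T₀ T₁ δ hlog hsel m hm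
  obtain ⟨ha₀0, hty₀⟩ := typeConst_spec B₀ m hp0
  obtain ⟨ha₁0, hty₁⟩ := typeConst_spec B₁ m hp0
  set a₀ := typeConst B₀ m p with ha₀def
  set a₁ := typeConst B₁ m p with ha₁def
  have h2m : (0:ℝ) < 2 ^ m := by positivity
  have hbdd : BddBelow {a : ℝ | 0 ≤ a ∧ ∀ x : Fin m → Bθ,
      (∑ ε : Fin m → Bool, ‖∑ j, (if ε j then (1 : ℝ) else -1) • x j‖) / 2 ^ m ≤
        a * (∑ j, ‖x j‖ ^ p) ^ (1 / p)} := ⟨0, fun b hb => hb.1⟩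
  have hCnonneg : 0 ≤ 2 * Real.exp 1 * K * a₀ ^ (1 - θ) * a₁ ^ θ := by
    apply mul_nonneg (mul_nonneg (by positivity) (Real.rpow_nonneg ha₀0 _))
      (Real.rpow_nonneg ha₁0 _)
  have hmain : ∀ x : Fin m → Bθ,
      (∑ ε : Fin m → Bool, ‖∑ j, (if ε j then (1 : ℝ) else -1) • x j‖) / 2 ^ m ≤
        (2 * Real.exp 1 * K * a₀ ^ (1 - θ) * a₁ ^ θ) * (∑ j, ‖x j‖ ^ p) ^ (1 / p) := by
    intro x
    show (∑ ε : Fin m → Bool, ‖∑ j, sg (ε j) • x j‖) / 2 ^ m ≤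
        (2 * Real.exp 1 * K * a₀ ^ (1 - θ) * a₁ ^ θ) * (∑ j, ‖x j‖ ^ p) ^ (1 / p)
    choose dfun hd hT0sel hT1sel using hsel
    set d : Fin m → D := fun j => dfun (x j) with hddef
    set R := (∑ j, ‖x j‖ ^ p) ^ (1 / p) with hRdef
    have hR0 : 0 ≤ R := Real.rpow_nonneg
      (Finset.sum_nonneg (fun j _ => Real.rpow_nonneg (norm_nonneg _) _)) _
    have hδD : ∀ ε : Fin m → Bool,
        δ (∑ j, sg (ε j) • d j) = ∑ j, sg (ε j) • x j := by
      intro ε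
      rw [map_sum]
      exact Finset.sum_congr rfl (fun j _ => by rw [map_smul, hd (x j)])
    set A : (Fin m → Bool) → ℝ := fun ε => ‖T₀ (∑ j, sg (ε j) • d j)‖ with hAdef
    set Bf : (Fin m → Bool) → ℝ := fun ε => ‖T₁ (∑ j, sg (ε j) • d j)‖ with hBdef
    have hA0 : ∀ ε, 0 ≤ A ε := fun ε => norm_nonneg _
    have hB0 : ∀ ε, 0 ≤ Bf ε := fun ε => norm_nonneg _
    have hSA0 : 0 ≤ ∑ ε : Fin m → Bool, A ε := Finset.sum_nonneg (fun ε _ => hA0 ε)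
    have hSB0 : 0 ≤ ∑ ε : Fin m → Bool, Bf ε := Finset.sum_nonneg (fun ε _ => hB0 ε)
    have hlog' : ∀ ε : Fin m → Bool,
        ‖∑ j, sg (ε j) • x j‖ ≤ Real.exp 1 * A ε ^ (1 - θ) * Bf ε ^ θ := by
      intro ε
      rw [← hδD ε]
      exact hlog _
    -- the representation bound, lifted through `ℓ_q`
    have hTA : ∀ ε : Fin m → Bool,
        T₀ (∑ j, sg (ε j) • d j) = ∑ j, sg (ε j) • T₀ (d j) := by
      intro ε
      rw [map_sum]
      exact Finset.sum_congr rfl (fun j _ => by rw [map_smul])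
    have hTB : ∀ ε : Fin m → Bool,
        T₁ (∑ j, sg (ε j) • d j) = ∑ j, sg (ε j) • T₁ (d j) := by
      intro ε
      rw [map_sum]
      exact Finset.sum_congr rfl (fun j _ => by rw [map_smul])
    have hpow_le : ∀ (Z : Fin m → ℝ), (∀ j, 0 ≤ Z j) → (∀ j, Z j ≤ 2 * ‖x j‖) →
        (∑ j, Z j ^ p) ^ (1/p) ≤ 2 * R := by
      intro Z hZ0 hZle
      have h1 : ∑ j, Z j ^ p ≤ ∑ j, ((2:ℝ) * ‖x j‖) ^ p :=
        Finset.sum_le_sum (fun j _ => Real.rpow_le_rpow (hZ0 j) (hZle j) hp0.le)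
      have h2 : ∑ j, ((2:ℝ) * ‖x j‖) ^ p = 2 ^ p * ∑ j, ‖x j‖ ^ p := by
        rw [Finset.mul_sum]
        exact Finset.sum_congr rfl (fun j _ =>
          Real.mul_rpow (by norm_num) (norm_nonneg _))
      have h3 : (0:ℝ) ≤ ∑ j, ‖x j‖ ^ p :=
        Finset.sum_nonneg (fun j _ => Real.rpow_nonneg (norm_nonneg _) _)
      calc (∑ j, Z j ^ p) ^ (1/p)
          ≤ (2 ^ p * ∑ j, ‖x j‖ ^ p) ^ (1/p) := by
            apply Real.rpow_le_rpow (Finset.sum_nonneg (fun j _ =>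
              Real.rpow_nonneg (hZ0 j) _)) (h1.trans_eq h2) (by positivity)
        _ = 2 * R := by
            rw [Real.mul_rpow (by positivity) h3, hRdef, ← Real.rpow_mul
              (by norm_num : (0:ℝ) ≤ 2), mul_one_div_cancel (ne_of_gt hp0), Real.rpow_one]
    have hsumA : (∑ ε : Fin m → Bool, A ε) / 2 ^ m ≤ K * a₀ * (2 * R) := by
      have hlift := lift_type hp0 hq1 hpq ha₀0 hty₀ (fun j => T₀ (d j))
      have heq : ∀ ε : Fin m → Bool, A ε = ‖∑ j, sg (ε j) • T₀ (d j)‖ := by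
        intro ε
        rw [hAdef]
        simp only
        rw [hTA ε]
      have hsum_eq : ∑ ε : Fin m → Bool, A ε
          = ∑ ε : Fin m → Bool, ‖∑ j, sg (ε j) • T₀ (d j)‖ :=
        Finset.sum_congr rfl (fun ε _ => heq ε)
      rw [hsum_eq]
      calc (∑ ε : Fin m → Bool, ‖∑ j, sg (ε j) • T₀ (d j)‖) / 2 ^ m
          ≤ K * a₀ * (∑ j, ‖T₀ (d j)‖ ^ p) ^ (1/p) := hlift
        _ ≤ K * a₀ * (2 * R) := by
            apply mul_le_mul_of_nonneg_left _ (mul_nonneg hKpos.le ha₀0)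
            exact hpow_le (fun j => ‖T₀ (d j)‖) (fun j => norm_nonneg _)
              (fun j => hT0sel (x j))
    have hsumB : (∑ ε : Fin m → Bool, Bf ε) / 2 ^ m ≤ K * a₁ * (2 * R) := by
      have hlift := lift_type hp0 hq1 hpq ha₁0 hty₁ (fun j => T₁ (d j))
      have heq : ∀ ε : Fin m → Bool, Bf ε = ‖∑ j, sg (ε j) • T₁ (d j)‖ := by
        intro ε
        rw [hBdef]
        simp only
        rw [hTB ε]
      have hsum_eq : ∑ ε : Fin m → Bool, Bf ε
          = ∑ ε : Fin m → Bool, ‖∑ j, sg (ε j) • T₁ (d j)‖ :=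
        Finset.sum_congr rfl (fun ε _ => heq ε)
      rw [hsum_eq]
      calc (∑ ε : Fin m → Bool, ‖∑ j, sg (ε j) • T₁ (d j)‖) / 2 ^ m
          ≤ K * a₁ * (∑ j, ‖T₁ (d j)‖ ^ p) ^ (1/p) := hlift
        _ ≤ K * a₁ * (2 * R) := by
            apply mul_le_mul_of_nonneg_left _ (mul_nonneg hKpos.le ha₁0)
            exact hpow_le (fun j => ‖T₁ (d j)‖) (fun j => norm_nonneg _)
              (fun j => hT1sel (x j))
    -- Hölder over the signs
    have hH := holder_sum univ A Bf (fun ε _ => hA0 ε) (fun ε _ => hB0 ε) hθ hθ1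
    have hL1 : ∑ ε : Fin m → Bool, ‖∑ j, sg (ε j) • x j‖
        ≤ Real.exp 1 * ∑ ε : Fin m → Bool, A ε ^ (1 - θ) * Bf ε ^ θ := by
      calc ∑ ε : Fin m → Bool, ‖∑ j, sg (ε j) • x j‖
          ≤ ∑ ε : Fin m → Bool, Real.exp 1 * A ε ^ (1 - θ) * Bf ε ^ θ :=
            Finset.sum_le_sum (fun ε _ => hlog' ε)
        _ = Real.exp 1 * ∑ ε : Fin m → Bool, A ε ^ (1 - θ) * Bf ε ^ θ := by
            rw [Finset.mul_sum]
            exact Finset.sum_congr rfl (fun ε _ => by ring)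
    -- put everything together
    have hdivsplit : ((∑ ε : Fin m → Bool, A ε) / 2 ^ m) ^ (1 - θ)
          * ((∑ ε : Fin m → Bool, Bf ε) / 2 ^ m) ^ θ
        = (∑ ε : Fin m → Bool, A ε) ^ (1 - θ) * (∑ ε : Fin m → Bool, Bf ε) ^ θ / 2 ^ m := by
      rw [Real.div_rpow hSA0 h2m.le, Real.div_rpow hSB0 h2m.le, div_mul_div_comm,
        rpow_self_split h2m.le hθ hθ1]
    have hrpow_bound : ((∑ ε : Fin m → Bool, A ε) / 2 ^ m) ^ (1 - θ)
          * ((∑ ε : Fin m → Bool, Bf ε) / 2 ^ m) ^ θ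
        ≤ (K * a₀ * (2 * R)) ^ (1 - θ) * (K * a₁ * (2 * R)) ^ θ := by
      apply mul_le_mul
      · exact Real.rpow_le_rpow (div_nonneg hSA0 h2m.le) hsumA (by linarith)
      · exact Real.rpow_le_rpow (div_nonneg hSB0 h2m.le) hsumB hθ.le
      · exact Real.rpow_nonneg (div_nonneg hSB0 h2m.le) _
      · exact Real.rpow_nonneg (by positivity) _
    have hfinal_split : (K * a₀ * (2 * R)) ^ (1 - θ) * (K * a₁ * (2 * R)) ^ θ
        = (2 * K * R) * (a₀ ^ (1 - θ) * a₁ ^ θ) := by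
      have e1 : K * a₀ * (2 * R) = (2 * K * R) * a₀ := by ring
      have e2 : K * a₁ * (2 * R) = (2 * K * R) * a₁ := by ring
      rw [e1, e2, Real.mul_rpow (by positivity) ha₀0, Real.mul_rpow (by positivity) ha₁0]
      have e3 : (2 * K * R) ^ (1 - θ) * a₀ ^ (1 - θ) * ((2 * K * R) ^ θ * a₁ ^ θ)
          = ((2 * K * R) ^ (1 - θ) * (2 * K * R) ^ θ) * (a₀ ^ (1 - θ) * a₁ ^ θ) := by ring
      rw [e3, rpow_self_split (by positivity) hθ hθ1]
    calc (∑ ε : Fin m → Bool, ‖∑ j, sg (ε j) • x j‖) / 2 ^ m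
        ≤ (Real.exp 1 * ∑ ε : Fin m → Bool, A ε ^ (1 - θ) * Bf ε ^ θ) / 2 ^ m := by
          gcongr
      _ ≤ (Real.exp 1 * ((∑ ε : Fin m → Bool, A ε) ^ (1 - θ)
            * (∑ ε : Fin m → Bool, Bf ε) ^ θ)) / 2 ^ m := by
          gcongr
      _ = Real.exp 1 * (((∑ ε : Fin m → Bool, A ε) / 2 ^ m) ^ (1 - θ)
            * ((∑ ε : Fin m → Bool, Bf ε) / 2 ^ m) ^ θ) := by
          rw [hdivsplit]
          ring
      _ ≤ Real.exp 1 * ((K * a₀ * (2 * R)) ^ (1 - θ) * (K * a₁ * (2 * R)) ^ θ) := by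
          apply mul_le_mul_of_nonneg_left hrpow_bound (Real.exp_pos 1).le
      _ = Real.exp 1 * ((2 * K * R) * (a₀ ^ (1 - θ) * a₁ ^ θ)) := by rw [hfinal_split]
      _ = (2 * Real.exp 1 * K * a₀ ^ (1 - θ) * a₁ ^ θ) * R := by ring
  exact csInf_le hbdd ⟨hCnonneg, hmain⟩
end

section
/- Let Ω : X → Y be a homogeneous map between Banach spaces, let T : X → Y be bounded linear, and suppose that for every m ≥ 1 and all x₁,...,x_m ∈ X one has 𝔼‖Ω(Σ_j ε_j x_j) − Σ_j ε_j Ω(x_j) − α·Σ_j ε_j x_j‖ ≤ γ·(Σ_j ‖x_j‖^p)^{1/p} for constants α ∈ ℝ, γ > 0 and some 1 < p ≤ 2. Then the derived space dX = {(x,y) : x − Ω(y) ∈ X, y ∈ X} with quasinorm ‖(x,y)‖ = ‖x − Ω(y)‖ + ‖y‖ satisfies a_{m,p}(dX) ≤ 2a_{m,p}(X) + γ + |α|·a_{m,p}(X), where a_{m,p} denotes the m-th type-p constant computed with respect to the given quasinorm. -/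
/-- The `m`-th type-`p` constant of a vector space `V` equipped with a quasinorm `ρ`,
defined exactly as for normed spaces. -/
noncomputable def typeConstQ (V : Type*) [AddCommGroup V] [Module ℝ V]
    (ρ : V → ℝ) (m : ℕ) (p : ℝ) : ℝ :=
  sInf {a : ℝ | 0 ≤ a ∧ ∀ z : Fin m → V,
    (∑ ε : Fin m → Bool, ρ (∑ j, (if ε j then (1 : ℝ) else -1) • z j)) / 2 ^ m ≤
      a * (∑ j, ρ (z j) ^ p) ^ (1 / p)}

lemma sInf_mem_typeSet {ι : Type*} (f g : ι → ℝ) (hg : ∀ i, 0 ≤ g i)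
    (hne : {a : ℝ | 0 ≤ a ∧ ∀ i, f i ≤ a * g i}.Nonempty) :
    0 ≤ sInf {a : ℝ | 0 ≤ a ∧ ∀ i, f i ≤ a * g i} ∧
    ∀ i, f i ≤ sInf {a : ℝ | 0 ≤ a ∧ ∀ i, f i ≤ a * g i} * g i := by
  set S := {a : ℝ | 0 ≤ a ∧ ∀ i, f i ≤ a * g i} with hS
  have h0 : 0 ≤ sInf S := le_csInf hne fun a ha => ha.1
  refine ⟨h0, fun i => ?_⟩
  rcases eq_or_lt_of_le (hg i) with h | h
  · obtain ⟨a, ha0, ha⟩ := hne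
    have h2 := ha i
    rw [← h, mul_zero] at h2 ⊢
    exact h2
  · have hdiv : f i / g i ≤ sInf S :=
      le_csInf hne fun a ha => (div_le_iff₀ h).2 (ha.2 i)
    calc f i = f i / g i * g i := (div_mul_cancel₀ _ h.ne').symm
      _ ≤ sInf S * g i := mul_le_mul_of_nonneg_right hdiv (hg i)

lemma typeConst_spec {X : Type*} [NormedAddCommGroup X] [NormedSpace ℝ X]
    (m : ℕ) (p : ℝ) (hp : 1 < p) :
    0 ≤ typeConst X m p ∧ ∀ x : Fin m → X,
      (∑ ε : Fin m → Bool, ‖∑ j, (if ε j then (1 : ℝ) else -1) • x j‖) / 2 ^ m ≤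
        typeConst X m p * (∑ j, ‖x j‖ ^ p) ^ (1 / p) := by
  have hp0 : 0 < p := lt_trans one_pos hp
  have hg : ∀ x : Fin m → X, (0:ℝ) ≤ (∑ j, ‖x j‖ ^ p) ^ (1 / p) := by
    intro x
    apply Real.rpow_nonneg
    exact Finset.sum_nonneg fun j _ => Real.rpow_nonneg (norm_nonneg _) p
  have hne : {a : ℝ | 0 ≤ a ∧ ∀ x : Fin m → X,
      (∑ ε : Fin m → Bool, ‖∑ j, (if ε j then (1 : ℝ) else -1) • x j‖) / 2 ^ m ≤
        a * (∑ j, ‖x j‖ ^ p) ^ (1 / p)}.Nonempty := by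
    refine ⟨(m : ℝ), Nat.cast_nonneg m, fun x => ?_⟩
    have hsingle : ∀ j, ‖x j‖ ≤ (∑ k, ‖x k‖ ^ p) ^ (1 / p) := by
      intro j
      have h1 : ‖x j‖ ^ p ≤ ∑ k, ‖x k‖ ^ p :=
        Finset.single_le_sum (fun k _ => Real.rpow_nonneg (norm_nonneg _) p)
          (Finset.mem_univ j)
      have h2 : (‖x j‖ ^ p) ^ (1 / p) = ‖x j‖ := by
        rw [← Real.rpow_mul (norm_nonneg _), mul_one_div, div_self hp0.ne', Real.rpow_one]
      rw [← h2]
      exact Real.rpow_le_rpow (Real.rpow_nonneg (norm_nonneg _) p) h1 (by positivity)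
    rw [div_le_iff₀ (by positivity)]
    calc ∑ ε : Fin m → Bool, ‖∑ j, (if ε j then (1 : ℝ) else -1) • x j‖
        ≤ ∑ _ε : Fin m → Bool, ∑ j, ‖x j‖ := by
          refine Finset.sum_le_sum fun ε _ => ?_
          refine (norm_sum_le _ _).trans (Finset.sum_le_sum fun j _ => ?_)
          rw [norm_smul]
          by_cases h : ε j <;> simp [h]
      _ = 2 ^ m * ∑ j, ‖x j‖ := by
          rw [Finset.sum_const, Finset.card_univ]
          simp [Fintype.card_fun, mul_comm]
      _ ≤ 2 ^ m * (m * (∑ k, ‖x k‖ ^ p) ^ (1 / p)) := by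
          have : ∑ j, ‖x j‖ ≤ m * (∑ k, ‖x k‖ ^ p) ^ (1 / p) := by
            calc ∑ j, ‖x j‖ ≤ ∑ _j : Fin m, (∑ k, ‖x k‖ ^ p) ^ (1 / p) :=
                  Finset.sum_le_sum fun j _ => hsingle j
              _ = m * (∑ k, ‖x k‖ ^ p) ^ (1 / p) := by
                  rw [Finset.sum_const, Finset.card_univ]; simp
          exact mul_le_mul_of_nonneg_left this (by positivity)
      _ = (m : ℝ) * (∑ k, ‖x k‖ ^ p) ^ (1 / p) * 2 ^ m := by ring
  exact sInf_mem_typeSet _ _ hg hne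

theorem stmt12 {X : Type*} [NormedAddCommGroup X] [NormedSpace ℝ X] [CompleteSpace X]
    (Ω : X → X) (hhom : ∀ (c : ℝ) (x : X), Ω (c • x) = c • Ω x)
    (p α γ : ℝ) (hp : 1 < p) (hp2 : p ≤ 2) (hγ : 0 < γ)
    (hrandom : ∀ m : ℕ, 1 ≤ m → ∀ x : Fin m → X,
      (∑ ε : Fin m → Bool,
          ‖Ω (∑ j, (if ε j then (1 : ℝ) else -1) • x j) -
            (∑ j, (if ε j then (1 : ℝ) else -1) • Ω (x j)) -
            α • ∑ j, (if ε j then (1 : ℝ) else -1) • x j‖) / 2 ^ m ≤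
        γ * (∑ j, ‖x j‖ ^ p) ^ (1 / p)) :
    ∀ m : ℕ, 1 ≤ m →
      typeConstQ (X × X) (fun z => ‖z.1 - Ω z.2‖ + ‖z.2‖) m p ≤
        2 * typeConst X m p + γ + |α| * typeConst X m p := by
  intro m hm
  have hp0 : 0 < p := lt_trans one_pos hp
  obtain ⟨ha0, hA⟩ := typeConst_spec (X := X) m p hp
  set a := typeConst X m p with ha
  have habs : (0:ℝ) ≤ |α| := abs_nonneg α
  unfold typeConstQ
  apply csInf_le ⟨0, fun b hb => hb.1⟩
  refine ⟨by nlinarith, fun z => ?_⟩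
  dsimp only
  simp only [Prod.fst_sum, Prod.snd_sum, Prod.smul_fst, Prod.smul_snd]
  -- abbreviations
  set Tu : ℝ := (∑ j, ‖(z j).1 - Ω (z j).2‖ ^ p) ^ (1 / p) with hTu'
  set Ty : ℝ := (∑ j, ‖(z j).2‖ ^ p) ^ (1 / p) with hTy'
  set Tρ : ℝ := (∑ j, (‖(z j).1 - Ω (z j).2‖ + ‖(z j).2‖) ^ p) ^ (1 / p) with hTρ'
  have hTρ0 : 0 ≤ Tρ := Real.rpow_nonneg
    (Finset.sum_nonneg fun j _ => Real.rpow_nonneg (by positivity) p) _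
  have hTuρ : Tu ≤ Tρ := by
    apply Real.rpow_le_rpow
    · exact Finset.sum_nonneg fun j _ => Real.rpow_nonneg (norm_nonneg _) p
    · refine Finset.sum_le_sum fun j _ => ?_
      exact Real.rpow_le_rpow (norm_nonneg _) (by linarith [norm_nonneg (z j).2]) hp0.le
    · positivity
  have hTyρ : Ty ≤ Tρ := by
    apply Real.rpow_le_rpow
    · exact Finset.sum_nonneg fun j _ => Real.rpow_nonneg (norm_nonneg _) p
    · refine Finset.sum_le_sum fun j _ => ?_
      exact Real.rpow_le_rpow (norm_nonneg _)
        (by linarith [norm_nonneg ((z j).1 - Ω (z j).2)]) hp0.le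
    · positivity
  have hpt : ∀ ε : Fin m → Bool,
      ‖(∑ j, (if ε j then (1:ℝ) else -1) • (z j).1) -
          Ω (∑ j, (if ε j then (1:ℝ) else -1) • (z j).2)‖ +
        ‖∑ j, (if ε j then (1:ℝ) else -1) • (z j).2‖ ≤
      ‖∑ j, (if ε j then (1:ℝ) else -1) • ((z j).1 - Ω (z j).2)‖ +
      ‖Ω (∑ j, (if ε j then (1:ℝ) else -1) • (z j).2) -
          (∑ j, (if ε j then (1:ℝ) else -1) • Ω ((z j).2)) -
          α • ∑ j, (if ε j then (1:ℝ) else -1) • (z j).2‖ +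
      |α| * ‖∑ j, (if ε j then (1:ℝ) else -1) • (z j).2‖ +
      ‖∑ j, (if ε j then (1:ℝ) else -1) • (z j).2‖ := by
    intro ε
    have key : (∑ j, (if ε j then (1:ℝ) else -1) • (z j).1) -
        Ω (∑ j, (if ε j then (1:ℝ) else -1) • (z j).2) =
        (∑ j, (if ε j then (1:ℝ) else -1) • ((z j).1 - Ω (z j).2)) -
        (Ω (∑ j, (if ε j then (1:ℝ) else -1) • (z j).2) -
          (∑ j, (if ε j then (1:ℝ) else -1) • Ω ((z j).2)) -
          α • ∑ j, (if ε j then (1:ℝ) else -1) • (z j).2) -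
        α • ∑ j, (if ε j then (1:ℝ) else -1) • (z j).2 := by
      simp only [smul_sub, Finset.sum_sub_distrib]
      abel
    rw [key]
    have h1 := norm_sub_le
      ((∑ j, (if ε j then (1:ℝ) else -1) • ((z j).1 - Ω (z j).2)) -
        (Ω (∑ j, (if ε j then (1:ℝ) else -1) • (z j).2) -
          (∑ j, (if ε j then (1:ℝ) else -1) • Ω ((z j).2)) -
          α • ∑ j, (if ε j then (1:ℝ) else -1) • (z j).2))
      (α • ∑ j, (if ε j then (1:ℝ) else -1) • (z j).2)
    have h2 := norm_sub_le
      (∑ j, (if ε j then (1:ℝ) else -1) • ((z j).1 - Ω (z j).2))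
      (Ω (∑ j, (if ε j then (1:ℝ) else -1) • (z j).2) -
        (∑ j, (if ε j then (1:ℝ) else -1) • Ω ((z j).2)) -
        α • ∑ j, (if ε j then (1:ℝ) else -1) • (z j).2)
    have h3 : ‖α • ∑ j, (if ε j then (1:ℝ) else -1) • (z j).2‖ =
        |α| * ‖∑ j, (if ε j then (1:ℝ) else -1) • (z j).2‖ := by
      rw [norm_smul, Real.norm_eq_abs]
    linarith
  have hsum : (∑ ε : Fin m → Bool,
      (‖(∑ j, (if ε j then (1:ℝ) else -1) • (z j).1) -
          Ω (∑ j, (if ε j then (1:ℝ) else -1) • (z j).2)‖ +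
        ‖∑ j, (if ε j then (1:ℝ) else -1) • (z j).2‖)) ≤
      (∑ ε : Fin m → Bool, ‖∑ j, (if ε j then (1:ℝ) else -1) • ((z j).1 - Ω (z j).2)‖) +
      (∑ ε : Fin m → Bool, ‖Ω (∑ j, (if ε j then (1:ℝ) else -1) • (z j).2) -
          (∑ j, (if ε j then (1:ℝ) else -1) • Ω ((z j).2)) -
          α • ∑ j, (if ε j then (1:ℝ) else -1) • (z j).2‖) +
      |α| * (∑ ε : Fin m → Bool, ‖∑ j, (if ε j then (1:ℝ) else -1) • (z j).2‖) +
      (∑ ε : Fin m → Bool, ‖∑ j, (if ε j then (1:ℝ) else -1) • (z j).2‖) := by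
    calc (∑ ε : Fin m → Bool, _) ≤ _ := Finset.sum_le_sum fun ε _ => hpt ε
      _ = _ := by
        simp only [Finset.sum_add_distrib, Finset.mul_sum]
  have h2m : (0:ℝ) < 2 ^ m := by positivity
  have hdiv : (∑ ε : Fin m → Bool,
      (‖(∑ j, (if ε j then (1:ℝ) else -1) • (z j).1) -
          Ω (∑ j, (if ε j then (1:ℝ) else -1) • (z j).2)‖ +
        ‖∑ j, (if ε j then (1:ℝ) else -1) • (z j).2‖)) / 2 ^ m ≤
      a * Tu + γ * Ty + |α| * (a * Ty) + a * Ty := by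
    rw [div_le_iff₀ h2m]
    have hAu := hA (fun j => (z j).1 - Ω (z j).2)
    have hAy := hA (fun j => (z j).2)
    have hD := hrandom m hm (fun j => (z j).2)
    rw [div_le_iff₀ h2m] at hAu hAy hD
    rw [← hTu'] at hAu
    rw [← hTy'] at hAy hD
    nlinarith [hsum, habs, mul_le_mul_of_nonneg_left hAy habs]
  calc _ ≤ a * Tu + γ * Ty + |α| * (a * Ty) + a * Ty := hdiv
    _ ≤ a * Tρ + γ * Tρ + |α| * (a * Tρ) + a * Tρ := by
        have h1 := mul_le_mul_of_nonneg_left hTuρ ha0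
        have h2 := mul_le_mul_of_nonneg_left hTyρ hγ.le
        have h3 := mul_le_mul_of_nonneg_left hTyρ ha0
        nlinarith [mul_le_mul_of_nonneg_left h3 habs]
    _ = (2 * a + γ + |α| * a) * Tρ := by ring
end
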